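/- arXiv:2502.10902 — 5 statements merged into one kernel-verified Lean document; each statement's English description precedes it below -/
import Mathlib

section
/- If S ⊆ ℕ has polynomial density with exponent α ≥ 1, then for any A ⊆ S with positive upper density relative to S, the convergence exponent of A equals 1/α. -/
open Filter Set

/-- `S` has polynomial density with exponent `α`: there are `C₁, C₂ > 0` and `β ≥ 0` with
`C₁ N^{1/α} / (log N)^β ≤ #(S ∩ [1,N]) ≤ C₂ N^{1/α} / (log N)^β` for all large `N`. -/
def HasPolyDensity (S : Set ℕ) (α : ℝ) : Prop :=
  ∃ C₁ C₂ β : ℝ, 0 < C₁ ∧ 0 < C₂ ∧ 0 ≤ β ∧ ∀ᶠ N : ℕ in Filter.atTop,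
    C₁ * (N : ℝ) ^ (1 / α) / (Real.log N) ^ β ≤ ((S ∩ Set.Icc 1 N).ncard : ℝ) ∧
      ((S ∩ Set.Icc 1 N).ncard : ℝ) ≤ C₂ * (N : ℝ) ^ (1 / α) / (Real.log N) ^ β

/-- The upper density of `A` relative to `S`. -/
noncomputable def relUpperDensity (A S : Set ℕ) : ℝ :=
  Filter.limsup
    (fun N : ℕ => ((A ∩ Set.Icc 1 N).ncard : ℝ) / ((S ∩ Set.Icc 1 N).ncard : ℝ))
    Filter.atTop

/-- The convergence exponent `τ(A) = inf {t ≥ 0 : ∑_{a ∈ A} a^{-t} < ∞}`. -/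
noncomputable def convExponent (A : Set ℕ) : ℝ :=
  sInf {t : ℝ | 0 ≤ t ∧ Summable (fun a : A => (a : ℝ) ^ (-t))}

/-! ### Auxiliary lemmas -/

lemma aux_one_le_log {x : ℝ} (hx : 3 ≤ x) : 1 ≤ Real.log x := by
  have hx0 : 0 < x := by linarith
  rw [Real.le_log_iff_exp_le hx0]
  have := Real.exp_one_lt_d9
  linarith

lemma aux_tendsto_rpow_div_log {s β : ℝ} (hs : 0 < s) :
    Tendsto (fun x : ℝ => x ^ s / Real.log x ^ β) atTop atTop := by
  have h := isLittleO_log_rpow_rpow_atTop β (half_pos hs)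
  have hb := h.bound one_pos
  apply tendsto_atTop_mono' atTop ?_ (tendsto_rpow_atTop (half_pos hs))
  filter_upwards [hb, eventually_ge_atTop (3:ℝ)] with x hx h3
  have hx0 : (0:ℝ) < x := by linarith
  have hlog1 : 1 ≤ Real.log x := aux_one_le_log h3
  have hL0 : 0 < Real.log x ^ β := Real.rpow_pos_of_pos (by linarith) β
  have hLle : Real.log x ^ β ≤ x ^ (s / 2) := by
    simp only [Real.norm_eq_abs, one_mul] at hx
    calc Real.log x ^ β ≤ |Real.log x ^ β| := le_abs_self _
      _ ≤ |x ^ (s / 2)| := hx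
      _ = x ^ (s / 2) := abs_of_nonneg (Real.rpow_nonneg hx0.le _)
  rw [le_div_iff₀ hL0]
  calc x ^ (s / 2) * Real.log x ^ β ≤ x ^ (s / 2) * x ^ (s / 2) := by
        nlinarith [Real.rpow_nonneg hx0.le (s / 2)]
    _ = x ^ s := by rw [← Real.rpow_add hx0]; norm_num

lemma aux_ncard_eq (A : Set ℕ) [DecidablePred (· ∈ A)] (N : ℕ) :
    (A ∩ Set.Icc 1 N).ncard = ((Finset.Icc 1 N).filter (· ∈ A)).card := by
  rw [← Set.ncard_coe_finset]
  congr 1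
  ext m
  simp only [Finset.coe_filter, Finset.mem_Icc, Set.mem_inter_iff, Set.mem_Icc, Set.mem_setOf_eq]
  tauto


set_option maxHeartbeats 1000000 in
lemma aux_summable_of_gt (S : Set ℕ) (α : ℝ) (hα : 1 ≤ α) (hS : HasPolyDensity S α)
    (A : Set ℕ) (hAS : A ⊆ S) {t : ℝ} (ht : 1 / α < t) :
    Summable (fun a : A => (a : ℝ) ^ (-t)) := by
  classical
  have hα0 : (0:ℝ) < α := lt_of_lt_of_le one_pos hα
  have h1α : (0:ℝ) < 1 / α := by positivity
  have ht0 : 0 < t := h1α.trans ht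
  by_cases hfin : A.Finite
  · haveI := hfin.to_subtype
    exact Summable.of_finite
  have hp : {n : ℕ | n ∈ A}.Infinite := by rwa [Set.setOf_mem_eq]
  obtain ⟨C₁, C₂, β, hC₁, hC₂, hβ, hev⟩ := hS
  obtain ⟨N₀, hN₀⟩ := eventually_atTop.mp hev
  set a : ℕ → ℕ := Nat.nth (· ∈ A) with ha
  have hmono : StrictMono a := Nat.nth_strictMono hp
  have hle : ∀ n, n ≤ a n := fun n => hmono.le_apply
  have hcount : ∀ n, Nat.count (· ∈ A) (a n) = n := Nat.count_nth_of_infinite hp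
  have hmem : ∀ n, a n ∈ A := fun n => Nat.nth_mem_of_infinite hp n
  have hinj : Function.Injective a := Nat.nth_injective hp
  have hrange : Set.range a = A := by
    rw [ha, Nat.range_nth_of_infinite hp]
    exact Set.setOf_mem_eq
  have hcard : ∀ n : ℕ, Nat.count (· ∈ A) n ≤ ((Finset.Icc 1 n).filter (· ∈ A)).card + 1 := by
    intro n
    rw [Nat.count_eq_card_filter_range]
    have hsub : (Finset.range n).filter (· ∈ A) ⊆
        insert 0 ((Finset.Icc 1 n).filter (· ∈ A)) := by
      intro m hm
      simp only [Finset.mem_filter, Finset.mem_range] at hm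
      rcases Nat.eq_zero_or_pos m with h0 | h1
      · simp [h0]
      · exact Finset.mem_insert_of_mem
          (by simp only [Finset.mem_filter, Finset.mem_Icc]; exact ⟨⟨h1, hm.1.le⟩, hm.2⟩)
    exact (Finset.card_le_card hsub).trans (Finset.card_insert_le _ _)
  clear_value a
  obtain ⟨n₁, hN₀n₁, h3n₁, h2n₁⟩ : ∃ n₁ : ℕ, N₀ ≤ n₁ ∧ 3 ≤ n₁ ∧ 2 ≤ n₁ :=
    ⟨max (max N₀ 3) 2, (le_max_left N₀ 3).trans (le_max_left _ 2),
      (le_max_right N₀ 3).trans (le_max_left _ 2), le_max_right _ 2⟩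
  have key : ∀ n : ℕ, n₁ ≤ n →
      ((a n : ℕ) : ℝ) ^ (-t) ≤ (2 * C₂) ^ (α * t) * (n : ℝ) ^ (-(α * t)) := by
    intro n hn
    have hn2 : 2 ≤ n := le_trans h2n₁ hn
    have hn3 : 3 ≤ a n := le_trans (le_trans h3n₁ hn) (hle n)
    have hnN₀ : N₀ ≤ a n := le_trans (le_trans hN₀n₁ hn) (hle n)
    have hup := (hN₀ (a n) hnN₀).2
    have hlog : 1 ≤ Real.log (a n) := aux_one_le_log (by exact_mod_cast hn3)
    have hL1 : 1 ≤ Real.log (a n) ^ β := Real.one_le_rpow hlog hβ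
    have hup2 : ((S ∩ Set.Icc 1 (a n)).ncard : ℝ) ≤ C₂ * ((a n : ℕ) : ℝ) ^ (1 / α) :=
      hup.trans (div_le_self (by positivity) hL1)
    have hAcard : (((Finset.Icc 1 (a n)).filter (· ∈ A)).card : ℝ) ≤
        ((S ∩ Set.Icc 1 (a n)).ncard : ℝ) := by
      rw [aux_ncard_eq S]
      have hsub2 : (Finset.Icc 1 (a n)).filter (· ∈ A) ⊆ (Finset.Icc 1 (a n)).filter (· ∈ S) := by
        intro m hm
        simp only [Finset.mem_filter] at hm ⊢
        exact ⟨hm.1, hAS hm.2⟩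
      exact_mod_cast Finset.card_le_card hsub2
    have hnle : (n : ℝ) ≤ (((Finset.Icc 1 (a n)).filter (· ∈ A)).card : ℝ) + 1 := by
      have := hcard (a n)
      rw [hcount n] at this
      exact_mod_cast this
    have h2r : (2 : ℝ) ≤ (n : ℝ) := by exact_mod_cast hn2
    have hkey : (n : ℝ) / 2 ≤ C₂ * ((a n : ℕ) : ℝ) ^ (1 / α) := by nlinarith
    have hn0 : (0:ℝ) < (n : ℝ) := by linarith
    have hdiv : (n : ℝ) / (2 * C₂) ≤ ((a n : ℕ) : ℝ) ^ (1 / α) := by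
      rw [div_le_iff₀ (by positivity)]
      rw [div_le_iff₀ (by norm_num : (0:ℝ) < 2)] at hkey
      nlinarith
    have hpos : (0:ℝ) < (n : ℝ) / (2 * C₂) := by positivity
    have hexp : 1 / α * -(α * t) = -t := by
      field_simp
    have h1 : ((a n : ℕ) : ℝ) ^ (-t) = (((a n : ℕ) : ℝ) ^ (1 / α)) ^ (-(α * t)) := by
      rw [← Real.rpow_mul (Nat.cast_nonneg _), hexp]
    have h2 : (((a n : ℕ) : ℝ) ^ (1 / α)) ^ (-(α * t)) ≤ ((n : ℝ) / (2 * C₂)) ^ (-(α * t)) :=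
      Real.rpow_le_rpow_of_nonpos hpos hdiv (by nlinarith)
    have h3 : ((n : ℝ) / (2 * C₂)) ^ (-(α * t)) = (2 * C₂) ^ (α * t) * (n : ℝ) ^ (-(α * t)) := by
      rw [Real.div_rpow (Nat.cast_nonneg _) (by positivity : (0:ℝ) ≤ 2 * C₂),
        Real.rpow_neg (by positivity : (0:ℝ) ≤ 2 * C₂), div_inv_eq_mul, mul_comm]
    rw [h1]
    exact h2.trans_eq h3
  have hαt1 : 1 < α * t := by
    rw [div_lt_iff₀ hα0] at ht
    nlinarith
  have hsum1 : Summable (fun n : ℕ => (2 * C₂) ^ (α * t) * (n : ℝ) ^ (-(α * t))) :=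
    (Real.summable_nat_rpow.2 (by linarith)).mul_left _
  have hsum2 : Summable (fun n : ℕ => ((a (n + n₁) : ℕ) : ℝ) ^ (-t)) := by
    refine Summable.of_nonneg_of_le (fun n => Real.rpow_nonneg (Nat.cast_nonneg _) _)
      (fun n => key (n + n₁) (Nat.le_add_left _ _)) ?_
    exact (summable_nat_add_iff n₁).2 hsum1
  have hsum3 : Summable (fun n : ℕ => ((a n : ℕ) : ℝ) ^ (-t)) := (summable_nat_add_iff n₁).1 hsum2
  have hcomp : Summable ((Set.indicator A (fun m : ℕ => (m : ℝ) ^ (-t))) ∘ a) := by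
    have heq : ((Set.indicator A (fun m : ℕ => (m : ℝ) ^ (-t))) ∘ a) =
        fun n : ℕ => ((a n : ℕ) : ℝ) ^ (-t) := by
      funext n
      exact Set.indicator_of_mem (hmem n) _
    rw [heq]
    exact hsum3
  have hind : Summable (Set.indicator A (fun m : ℕ => (m : ℝ) ^ (-t))) := by
    refine (Function.Injective.summable_iff hinj ?_).1 hcomp
    intro m hm
    refine Set.indicator_of_notMem ?_ _
    rwa [hrange] at hm
  exact summable_subtype_iff_indicator.2 hind


set_option maxHeartbeats 1000000 in
lemma aux_not_summable_of_lt (S : Set ℕ) (α : ℝ) (hα : 1 ≤ α) (hS : HasPolyDensity S α)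
    (A : Set ℕ) (hAS : A ⊆ S) (hA : 0 < relUpperDensity A S) {t : ℝ}
    (ht0 : 0 ≤ t) (ht : t < 1 / α) :
    ¬ Summable (fun a : A => (a : ℝ) ^ (-t)) := by
  classical
  intro hsum
  have hα0 : (0:ℝ) < α := lt_of_lt_of_le one_pos hα
  obtain ⟨C₁, C₂, β, hC₁, hC₂, hβ, hev⟩ := hS
  have hind : Summable (Set.indicator A (fun m : ℕ => (m : ℝ) ^ (-t))) :=
    summable_subtype_iff_indicator.1 hsum
  set T := ∑' m : ℕ, Set.indicator A (fun m : ℕ => (m : ℝ) ^ (-t)) m with hT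
  have hTnonneg : 0 ≤ T :=
    tsum_nonneg fun m => Set.indicator_nonneg (fun m _ => Real.rpow_nonneg (Nat.cast_nonneg _) _) m
  have hsumle : ∀ u : Finset ℕ, ∑ m ∈ u, Set.indicator A (fun m : ℕ => (m : ℝ) ^ (-t)) m ≤ T :=
    fun u => Summable.sum_le_tsum u
      (fun m _ => Set.indicator_nonneg (fun m _ => Real.rpow_nonneg (Nat.cast_nonneg _) _) m) hind
  set r : ℕ → ℝ := fun N => ((A ∩ Set.Icc 1 N).ncard : ℝ) / ((S ∩ Set.Icc 1 N).ncard : ℝ) with hr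
  have hrnonneg : ∀ N, 0 ≤ r N := fun N => by positivity
  have hco : IsCoboundedUnder (· ≤ ·) atTop r :=
    Filter.isCoboundedUnder_le_of_le atTop hrnonneg
  set d := relUpperDensity A S with hd
  have hfreq : ∃ᶠ N in atTop, d / 2 < r N :=
    Filter.frequently_lt_of_lt_limsup hco (half_lt_self hA)
  have htd : Tendsto (fun N : ℕ => ((N : ℝ)) ^ (1 / α - t) / Real.log (N : ℝ) ^ β) atTop atTop :=
    (aux_tendsto_rpow_div_log (by linarith : (0:ℝ) < 1 / α - t)).comp
      tendsto_natCast_atTop_atTop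
  have hbig : ∀ᶠ N : ℕ in atTop,
      2 * (T + 1) / (d * C₁) ≤ ((N : ℝ)) ^ (1 / α - t) / Real.log (N : ℝ) ^ β :=
    htd.eventually (eventually_ge_atTop _)
  obtain ⟨N, hrN, hlow, hNbig, hN3⟩ :=
    (hfreq.and_eventually (hev.and (hbig.and (eventually_ge_atTop 3)))).exists
  -- notation
  set L := Real.log (N : ℝ) ^ β with hL
  have hN3r : (3:ℝ) ≤ (N : ℝ) := by exact_mod_cast hN3
  have hNpos : (0:ℝ) < (N : ℝ) := by linarith
  have hlog1 : 1 ≤ Real.log (N : ℝ) := aux_one_le_log hN3r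
  have hL0 : 0 < L := Real.rpow_pos_of_pos (by linarith) β
  set X := ((N : ℝ)) ^ (1 / α) with hX
  set Y := ((N : ℝ)) ^ (-t) with hY
  have hX0 : 0 < X := Real.rpow_pos_of_pos hNpos _
  have hY0 : 0 < Y := Real.rpow_pos_of_pos hNpos _
  have hsplit : ((N : ℝ)) ^ (1 / α - t) = X * Y := by
    rw [hX, hY, sub_eq_add_neg, Real.rpow_add hNpos]
  set Sc := ((S ∩ Set.Icc 1 N).ncard : ℝ) with hSc
  set Ac := ((A ∩ Set.Icc 1 N).ncard : ℝ) with hAc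
  have hScpos : 0 < Sc := lt_of_lt_of_le (by positivity) hlow.1
  have hAcge : d / 2 * Sc < Ac := by
    have := hrN
    rw [hr] at this
    rw [lt_div_iff₀ hScpos] at this
    linarith [this]
  -- partial sum lower bound
  have hFsum : Ac * Y ≤ T := by
    have h1 : Ac * Y ≤ ∑ m ∈ (Finset.Icc 1 N).filter (· ∈ A),
        Set.indicator A (fun m : ℕ => (m : ℝ) ^ (-t)) m := by
      rw [hAc, aux_ncard_eq A N]
      have h2 : ((((Finset.Icc 1 N).filter (· ∈ A)).card : ℝ)) * Y =
          ((Finset.Icc 1 N).filter (· ∈ A)).card • Y := (nsmul_eq_mul _ _).symm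
      rw [h2]
      have h3 : ∀ m ∈ (Finset.Icc 1 N).filter (· ∈ A), Y ≤
          Set.indicator A (fun m : ℕ => (m : ℝ) ^ (-t)) m := by
        intro m hm
        simp only [Finset.mem_filter, Finset.mem_Icc] at hm
        rw [Set.indicator_of_mem hm.2]
        have hm0 : (0:ℝ) < (m : ℝ) := by exact_mod_cast hm.1.1
        have hmN : ((m : ℕ) : ℝ) ≤ (N : ℝ) := by exact_mod_cast hm.1.2
        exact Real.rpow_le_rpow_of_nonpos hm0 hmN (neg_nonpos.2 ht0)
      exact Finset.card_nsmul_le_sum _ _ _ h3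
    exact h1.trans (hsumle _)
  -- final contradiction
  have hXY : 2 * (T + 1) * L ≤ X * Y * (d * C₁) := by
    have := hNbig
    rw [hsplit] at this
    rw [div_le_div_iff₀ (by positivity) hL0] at this
    linarith
  have hScX : C₁ * X ≤ Sc * L := by
    have := hlow.1
    rw [div_le_iff₀ hL0] at this
    linarith
  have hdpos : 0 < d := hA
  -- combine
  have c1 : C₁ * X * (Y * d) ≤ Sc * L * (Y * d) :=
    mul_le_mul_of_nonneg_right hScX (by positivity)
  have c2 : 2 * (T + 1) * L ≤ Sc * L * (Y * d) := by nlinarith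
  have c3 : 2 * (T + 1) ≤ Sc * (Y * d) := by
    have := (mul_le_mul_iff_of_pos_right hL0).1 (by nlinarith : 2 * (T + 1) * L ≤ Sc * (Y * d) * L)
    linarith
  have c4 : d * Sc * Y < 2 * (Ac * Y) := by nlinarith
  nlinarith


theorem stmt3 (S : Set ℕ) (α : ℝ) (hα : 1 ≤ α) (hS : HasPolyDensity S α)
    (A : Set ℕ) (hAS : A ⊆ S) (hA : 0 < relUpperDensity A S) :
    convExponent A = 1 / α := by
  have hα0 : (0:ℝ) < α := lt_of_lt_of_le one_pos hα
  have h1α : (0:ℝ) < 1 / α := by positivity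
  rw [convExponent]
  have hne : {t : ℝ | 0 ≤ t ∧ Summable (fun a : A => (a : ℝ) ^ (-t))}.Nonempty :=
    ⟨1 / α + 1, by positivity, aux_summable_of_gt S α hα hS A hAS (by linarith)⟩
  apply le_antisymm
  · apply le_of_forall_gt_imp_ge_of_dense
    intro c hc
    exact csInf_le ⟨0, fun x hx => hx.1⟩
      ⟨(h1α.trans hc).le, aux_summable_of_gt S α hα hS A hAS hc⟩
  · apply le_csInf hne
    intro t htmem
    by_contra hlt
    push_neg at hlt
    exact aux_not_summable_of_lt S α hα hS A hAS hA htmem.1 hlt htmem.2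
end

section
/- Let A = (⋃_{n∈ℕ} [n², n²+√n]) ∩ ℕ. Then A has upper Banach density 1 and convergence exponent 3/4. -/
open Filter Set

/-- The upper Banach density `d_B(A) = limsup_{N→∞} (sup_M #(A ∩ [M, M+N])) / N`. -/
noncomputable def banachDensity (A : Set ℕ) : ℝ :=
  Filter.limsup
    (fun N : ℕ => (⨆ M : ℕ, ((A ∩ Set.Icc M (M + N)).ncard : ℝ)) / N) Filter.atTop

def mySet : Set ℕ :=
  {m : ℕ | ∃ n : ℕ, 1 ≤ n ∧ ((n : ℝ) ^ 2 ≤ m ∧ (m : ℝ) ≤ (n : ℝ) ^ 2 + Real.sqrt n)}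

lemma natSqrt_le_real (n : ℕ) : (Nat.sqrt n : ℝ) ≤ Real.sqrt n := by
  rw [Real.le_sqrt (by positivity) (by positivity)]
  exact_mod_cast Nat.sqrt_le' n

lemma real_sqrt_lt (n : ℕ) : Real.sqrt n < (Nat.sqrt n : ℝ) + 1 := by
  rw [Real.sqrt_lt' (by positivity)]
  exact_mod_cast Nat.lt_succ_sqrt' n

lemma mem_mySet_iff {m : ℕ} :
    m ∈ mySet ↔ ∃ n : ℕ, 1 ≤ n ∧ n ^ 2 ≤ m ∧ m ≤ n ^ 2 + Nat.sqrt n := by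
  constructor
  · rintro ⟨n, hn, h1, h2⟩
    refine ⟨n, hn, by exact_mod_cast h1, ?_⟩
    have h3 : (m : ℝ) < (n : ℝ) ^ 2 + (Nat.sqrt n : ℝ) + 1 :=
      h2.trans_lt (by linarith [real_sqrt_lt n])
    have h4 : m < n ^ 2 + Nat.sqrt n + 1 := by exact_mod_cast (by push_cast; linarith : (m : ℝ) < ((n ^ 2 + Nat.sqrt n + 1 : ℕ) : ℝ))
    omega
  · rintro ⟨n, hn, h1, h2⟩
    refine ⟨n, hn, by exact_mod_cast h1, ?_⟩
    have h3 : (m : ℝ) ≤ ((n ^ 2 + Nat.sqrt n : ℕ) : ℝ) := by exact_mod_cast h2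
    have := natSqrt_le_real n
    push_cast at h3
    linarith

lemma sqrt_eq_of_block {m n : ℕ} (h1 : n ^ 2 ≤ m) (h2 : m ≤ n ^ 2 + Nat.sqrt n) :
    Nat.sqrt m = n := by
  have hs := Nat.sqrt_le_self n
  have hl : n ≤ Nat.sqrt m := Nat.le_sqrt.2 (by nlinarith)
  have hu : Nat.sqrt m < n + 1 := Nat.sqrt_lt.2 (by nlinarith)
  omega

lemma block_iff {m n : ℕ} (hn : 1 ≤ n) :
    (m ∈ mySet ∧ Nat.sqrt m = n) ↔ (n ^ 2 ≤ m ∧ m ≤ n ^ 2 + Nat.sqrt n) := by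
  constructor
  · rintro ⟨hm, rfl⟩
    obtain ⟨k, hk, h1, h2⟩ := mem_mySet_iff.1 hm
    have hk' := sqrt_eq_of_block h1 h2
    rw [hk']
    exact ⟨h1, h2⟩
  · rintro ⟨h1, h2⟩
    exact ⟨mem_mySet_iff.2 ⟨n, hn, h1, h2⟩, sqrt_eq_of_block h1 h2⟩

lemma block_sum_le (t : ℝ) (ht : 3 / 4 < t) (n : ℕ) :
    ∑ m ∈ Finset.Icc (n ^ 2) (n ^ 2 + Nat.sqrt n),
        (mySet.indicator fun m : ℕ => (m : ℝ) ^ (-t)) m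
      ≤ 2 * (n : ℝ) ^ ((1 : ℝ) / 2 - 2 * t) := by
  have hf0 : ∀ m : ℕ, 0 ≤ (mySet.indicator fun m : ℕ => (m : ℝ) ^ (-t)) m :=
    fun m => Set.indicator_nonneg (fun a _ => Real.rpow_nonneg (Nat.cast_nonneg a) _) m
  rcases Nat.eq_zero_or_pos n with rfl | hn
  · have h0 : (0 : ℕ) ∉ mySet := by
      rw [mem_mySet_iff]
      rintro ⟨n, hn, h1, -⟩
      nlinarith
    simp [Set.indicator_of_notMem h0]
    positivity
  · have hterm : ∀ m ∈ Finset.Icc (n ^ 2) (n ^ 2 + Nat.sqrt n),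
        (mySet.indicator fun m : ℕ => (m : ℝ) ^ (-t)) m ≤ (n : ℝ) ^ ((2 : ℝ) * (-t)) := by
      intro m hm
      obtain ⟨h1, h2⟩ := Finset.mem_Icc.1 hm
      have hcast : ((n : ℝ)) ^ 2 ≤ (m : ℝ) := by exact_mod_cast h1
      have hnpos : (0 : ℝ) < (n : ℝ) ^ 2 := by positivity
      have hle : (m : ℝ) ^ (-t) ≤ ((n : ℝ) ^ 2) ^ (-t) :=
        Real.rpow_le_rpow_of_nonpos hnpos hcast (by linarith)
      have hpow : ((n : ℝ) ^ 2) ^ (-t) = (n : ℝ) ^ ((2 : ℝ) * (-t)) := by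
        rw [← Real.rpow_natCast (n : ℝ) 2, ← Real.rpow_mul (Nat.cast_nonneg n)]
        norm_num
      calc (mySet.indicator fun m : ℕ => (m : ℝ) ^ (-t)) m
          ≤ (m : ℝ) ^ (-t) :=
            Set.indicator_le_self' (fun a _ => Real.rpow_nonneg (Nat.cast_nonneg a) _) m
        _ ≤ (n : ℝ) ^ ((2 : ℝ) * (-t)) := hpow ▸ hle
    have hcard : (Finset.Icc (n ^ 2) (n ^ 2 + Nat.sqrt n)).card = Nat.sqrt n + 1 := by
      rw [Nat.card_Icc]; omega
    have := Finset.sum_le_card_nsmul _ _ _ hterm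
    rw [hcard] at this
    refine this.trans ?_
    rw [nsmul_eq_mul]
    push_cast
    have h1 : ((Nat.sqrt n : ℝ) + 1) ≤ 2 * (n : ℝ) ^ ((1 : ℝ) / 2) := by
      have hle := natSqrt_le_real n
      have hge1 : (1 : ℝ) ≤ Real.sqrt n := by
        rw [Real.one_le_sqrt]
        exact_mod_cast hn
      rw [← Real.sqrt_eq_rpow]
      linarith
    have hrpos : (0 : ℝ) ≤ (n : ℝ) ^ ((2 : ℝ) * (-t)) := Real.rpow_nonneg (Nat.cast_nonneg n) _
    calc ((Nat.sqrt n : ℝ) + 1) * (n : ℝ) ^ ((2 : ℝ) * (-t))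
        ≤ 2 * (n : ℝ) ^ ((1 : ℝ) / 2) * (n : ℝ) ^ ((2 : ℝ) * (-t)) :=
          mul_le_mul_of_nonneg_right h1 hrpos
      _ = 2 * (n : ℝ) ^ ((1 : ℝ) / 2 - 2 * t) := by
          rw [mul_assoc, ← Real.rpow_add (by exact_mod_cast hn)]
          ring_nf

lemma aux_summable (t : ℝ) (ht : 3 / 4 < t) :
    Summable (mySet.indicator fun m : ℕ => (m : ℝ) ^ (-t)) := by
  classical
  set f := mySet.indicator fun m : ℕ => (m : ℝ) ^ (-t) with hf
  have hf0 : ∀ m : ℕ, 0 ≤ f m :=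
    fun m => Set.indicator_nonneg (fun a _ => Real.rpow_nonneg (Nat.cast_nonneg a) _) m
  have hcs : Summable fun n : ℕ => 2 * (n : ℝ) ^ ((1 : ℝ) / 2 - 2 * t) :=
    (Real.summable_nat_rpow.2 (by linarith)).mul_left 2
  apply summable_of_sum_range_le hf0 (c := ∑' n : ℕ, 2 * (n : ℝ) ^ ((1 : ℝ) / 2 - 2 * t))
  intro N
  rw [← Finset.sum_fiberwise_of_maps_to (g := Nat.sqrt) (t := Finset.range N)
      (fun m hm => Finset.mem_range.2 ((Nat.sqrt_le_self m).trans_lt (Finset.mem_range.1 hm))) f]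
  refine le_trans (Finset.sum_le_sum ?_) (Summable.sum_le_tsum _ (fun i _ => by positivity) hcs)
  intro n _
  set T := Finset.filter (fun m => Nat.sqrt m = n) (Finset.range N) with hT
  have hsub : T.filter (fun m => m ∈ mySet) ⊆ Finset.Icc (n ^ 2) (n ^ 2 + Nat.sqrt n) := by
    intro m hm
    simp only [hT, Finset.mem_filter, Finset.mem_range] at hm
    obtain ⟨⟨-, hsq⟩, hmS⟩ := hm
    obtain ⟨k, hk, h1, h2⟩ := mem_mySet_iff.1 hmS
    have hkn : k = n := by rw [← hsq, sqrt_eq_of_block h1 h2]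
    subst hkn
    exact Finset.mem_Icc.2 ⟨h1, h2⟩
  have step1 : ∑ m ∈ T, f m = ∑ m ∈ T.filter (fun m => m ∈ mySet), f m := by
    refine (Finset.sum_filter_of_ne ?_).symm
    intro m _ hne
    by_contra h
    exact hne (Set.indicator_of_notMem h _)
  calc ∑ m ∈ T, f m = ∑ m ∈ T.filter (fun m => m ∈ mySet), f m := step1
    _ ≤ ∑ m ∈ Finset.Icc (n ^ 2) (n ^ 2 + Nat.sqrt n), f m :=
        Finset.sum_le_sum_of_subset_of_nonneg hsub (fun i _ _ => hf0 i)
    _ ≤ 2 * (n : ℝ) ^ ((1 : ℝ) / 2 - 2 * t) := block_sum_le t ht n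

lemma aux_not_summable (t : ℝ) (ht0 : 0 ≤ t) (ht : t < 3 / 4) :
    ¬ Summable (mySet.indicator fun m : ℕ => (m : ℝ) ^ (-t)) := by
  classical
  intro hsum
  set f := mySet.indicator fun m : ℕ => (m : ℝ) ^ (-t) with hf
  have hf0 : ∀ m : ℕ, 0 ≤ f m :=
    fun m => Set.indicator_nonneg (fun a _ => Real.rpow_nonneg (Nat.cast_nonneg a) _) m
  set g : ℕ → ℝ := fun n => ∑ m ∈ Finset.Icc (n ^ 2) (n ^ 2 + Nat.sqrt n), f m with hg
  have hg0 : ∀ n, 0 ≤ g n := fun n => Finset.sum_nonneg fun i _ => hf0 i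
  have hgsum : Summable g := by
    apply summable_of_sum_range_le hg0 (c := ∑' m : ℕ, f m)
    intro N
    have hdisj : (↑(Finset.range N) : Set ℕ).PairwiseDisjoint
        (fun n : ℕ => Finset.Icc (n ^ 2) (n ^ 2 + Nat.sqrt n)) := by
      intro a _ b _ hab
      simp only [Function.onFun]
      rw [Finset.disjoint_left]
      intro m hma hmb
      obtain ⟨ha1, ha2⟩ := Finset.mem_Icc.1 hma
      obtain ⟨hb1, hb2⟩ := Finset.mem_Icc.1 hmb
      exact hab ((sqrt_eq_of_block ha1 ha2).symm.trans (sqrt_eq_of_block hb1 hb2))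
    rw [← Finset.sum_biUnion hdisj]
    exact Summable.sum_le_tsum _ (fun i _ => hf0 i) hsum
  -- lower bound
  have hlow : ∀ n : ℕ, (4 : ℝ) ^ (-t) * ((n + 1 : ℕ) : ℝ) ^ ((1 : ℝ) / 2 - 2 * t) ≤ g (n + 1) := by
    intro n
    set k := n + 1 with hk
    have hk1 : 1 ≤ k := Nat.le_add_left 1 n
    have hkpos : (0 : ℝ) < (k : ℝ) := by exact_mod_cast hk1
    have hterm : ∀ m ∈ Finset.Icc (k ^ 2) (k ^ 2 + Nat.sqrt k),
        (4 : ℝ) ^ (-t) * (k : ℝ) ^ ((2 : ℝ) * (-t)) ≤ f m := by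
      intro m hm
      obtain ⟨h1, h2⟩ := Finset.mem_Icc.1 hm
      have hmS : m ∈ mySet := ((block_iff hk1).2 ⟨h1, h2⟩).1
      have hmpos : (0 : ℝ) < (m : ℝ) := by
        have : 1 ≤ m := le_trans (by nlinarith) h1
        exact_mod_cast this
      have hm4 : (m : ℝ) ≤ 4 * (k : ℝ) ^ 2 := by
        have hs := Nat.sqrt_le_self k
        have : m ≤ 4 * k ^ 2 := by nlinarith
        exact_mod_cast this
      have hle : (4 * (k : ℝ) ^ 2) ^ (-t) ≤ (m : ℝ) ^ (-t) :=
        Real.rpow_le_rpow_of_nonpos hmpos hm4 (by linarith)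
      have heq : (4 * (k : ℝ) ^ 2) ^ (-t) = (4 : ℝ) ^ (-t) * (k : ℝ) ^ ((2 : ℝ) * (-t)) := by
        rw [Real.mul_rpow (by norm_num) (by positivity)]
        congr 1
        rw [← Real.rpow_natCast (k : ℝ) 2, ← Real.rpow_mul (Nat.cast_nonneg k)]
        norm_num
      rw [hf, Set.indicator_of_mem hmS]
      exact heq ▸ hle
    have hcardsum := Finset.card_nsmul_le_sum _ _ _ hterm
    have hcard : (Finset.Icc (k ^ 2) (k ^ 2 + Nat.sqrt k)).card = Nat.sqrt k + 1 := by
      rw [Nat.card_Icc]; omega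
    rw [hcard, nsmul_eq_mul] at hcardsum
    refine le_trans ?_ hcardsum
    have hsqle : (k : ℝ) ^ ((1 : ℝ) / 2) ≤ (Nat.sqrt k : ℝ) + 1 := by
      rw [← Real.sqrt_eq_rpow]
      exact (real_sqrt_lt k).le
    have hbase : (0 : ℝ) ≤ (4 : ℝ) ^ (-t) * (k : ℝ) ^ ((2 : ℝ) * (-t)) := by positivity
    calc (4 : ℝ) ^ (-t) * (k : ℝ) ^ ((1 : ℝ) / 2 - 2 * t)
        = (k : ℝ) ^ ((1 : ℝ) / 2) * ((4 : ℝ) ^ (-t) * (k : ℝ) ^ ((2 : ℝ) * (-t))) := by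
          rw [show (1 : ℝ) / 2 - 2 * t = 1 / 2 + 2 * (-t) by ring, Real.rpow_add hkpos]
          ring
      _ ≤ ((Nat.sqrt k : ℝ) + 1) * ((4 : ℝ) ^ (-t) * (k : ℝ) ^ ((2 : ℝ) * (-t))) :=
          mul_le_mul_of_nonneg_right hsqle hbase
      _ ≤ ↑(Nat.sqrt k + 1) * ((4 : ℝ) ^ (-t) * (k : ℝ) ^ ((2 : ℝ) * (-t))) := le_of_eq (by push_cast; ring)
  have hsum2 : Summable fun n : ℕ => (4 : ℝ) ^ (-t) * ((n + 1 : ℕ) : ℝ) ^ ((1 : ℝ) / 2 - 2 * t) := by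
    refine Summable.of_nonneg_of_le (fun n => by positivity) hlow ?_
    exact (summable_nat_add_iff 1).2 hgsum
  have hsum3 : Summable fun n : ℕ => ((n + 1 : ℕ) : ℝ) ^ ((1 : ℝ) / 2 - 2 * t) := by
    have := hsum2.mul_left ((4 : ℝ) ^ t)
    refine this.congr fun n => ?_
    rw [← mul_assoc, ← Real.rpow_add (by norm_num : (0:ℝ) < 4)]
    norm_num
  have hsum4 : Summable fun n : ℕ => ((n : ℕ) : ℝ) ^ ((1 : ℝ) / 2 - 2 * t) :=
    (summable_nat_add_iff 1).1 hsum3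
  have := Real.summable_nat_rpow.1 hsum4
  linarith

lemma ub_card (N M : ℕ) : ((mySet ∩ Set.Icc M (M + N)).ncard : ℝ) ≤ (N : ℝ) + 1 := by
  have hfin : (Set.Icc M (M + N)).Finite := Set.finite_Icc _ _
  have h1 : (mySet ∩ Set.Icc M (M + N)).ncard ≤ (Set.Icc M (M + N)).ncard :=
    Set.ncard_le_ncard Set.inter_subset_right hfin
  have h2 : (Set.Icc M (M + N)).ncard = N + 1 := by
    rw [← Finset.coe_Icc, Set.ncard_coe_finset, Nat.card_Icc]
    omega
  rw [h2] at h1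
  exact_mod_cast h1

lemma sup_eq (N : ℕ) (hN : 1 ≤ N) :
    (⨆ M : ℕ, ((mySet ∩ Set.Icc M (M + N)).ncard : ℝ)) = (N : ℝ) + 1 := by
  have hbdd : BddAbove (Set.range fun M : ℕ => ((mySet ∩ Set.Icc M (M + N)).ncard : ℝ)) := by
    refine ⟨(N : ℝ) + 1, ?_⟩
    rintro x ⟨M, rfl⟩
    exact ub_card N M
  apply le_antisymm
  · exact ciSup_le fun M => ub_card N M
  · have hmem : mySet ∩ Set.Icc ((N ^ 2) ^ 2) ((N ^ 2) ^ 2 + N) =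
        Set.Icc ((N ^ 2) ^ 2) ((N ^ 2) ^ 2 + N) := by
      apply Set.inter_eq_self_of_subset_right
      intro m hm
      obtain ⟨h1, h2⟩ := Set.mem_Icc.1 hm
      refine ⟨N ^ 2, by nlinarith, ?_, ?_⟩
      · push_cast
        exact_mod_cast (by push_cast; norm_cast : ((((N ^ 2) ^ 2 : ℕ)) : ℝ) ≤ (m : ℝ)) |>.trans_eq rfl
      · have hsqrt : Real.sqrt ((N ^ 2 : ℕ) : ℝ) = (N : ℝ) := by
          push_cast
          exact Real.sqrt_sq (Nat.cast_nonneg N)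
        rw [hsqrt]
        push_cast
        exact_mod_cast h2
    have hval : ((mySet ∩ Set.Icc ((N ^ 2) ^ 2) ((N ^ 2) ^ 2 + N)).ncard : ℝ) = (N : ℝ) + 1 := by
      rw [hmem, ← Finset.coe_Icc, Set.ncard_coe_finset, Nat.card_Icc,
        show (N ^ 2) ^ 2 + N + 1 - (N ^ 2) ^ 2 = N + 1 by omega]
      push_cast
      ring
    calc (N : ℝ) + 1 = _ := hval.symm
      _ ≤ ⨆ M : ℕ, ((mySet ∩ Set.Icc M (M + N)).ncard : ℝ) := le_ciSup hbdd ((N ^ 2) ^ 2)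

/-- For `A = (⋃ₙ [n², n² + √n]) ∩ ℕ` we have `d_B(A) = 1` and `τ(A) = 3/4`. -/
theorem stmt5 :
    banachDensity {m : ℕ | ∃ n : ℕ, 1 ≤ n ∧ ((n : ℝ) ^ 2 ≤ m ∧ (m : ℝ) ≤ (n : ℝ) ^ 2 + Real.sqrt n)} = 1 ∧
      convExponent {m : ℕ | ∃ n : ℕ, 1 ≤ n ∧ ((n : ℝ) ^ 2 ≤ m ∧ (m : ℝ) ≤ (n : ℝ) ^ 2 + Real.sqrt n)} = 3 / 4 := by
  constructor
  · show banachDensity mySet = 1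
    have htend : Tendsto
        (fun N : ℕ => (⨆ M : ℕ, ((mySet ∩ Set.Icc M (M + N)).ncard : ℝ)) / N) atTop (nhds 1) := by
      have h1 : Tendsto (fun N : ℕ => 1 + (N : ℝ)⁻¹) atTop (nhds 1) := by
        have h2 : Tendsto (fun N : ℕ => (N : ℝ)⁻¹) atTop (nhds 0) :=
          tendsto_inv_atTop_zero.comp tendsto_natCast_atTop_atTop
        have h3 := (tendsto_const_nhds (x := (1 : ℝ)) (f := (atTop : Filter ℕ))).add h2
        simpa using h3
      refine h1.congr' ?_
      filter_upwards [eventually_ge_atTop 1] with N hN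
      have hNne : (N : ℝ) ≠ 0 := by positivity
      rw [sup_eq N hN]
      field_simp
    exact htend.limsup_eq
  · show convExponent mySet = 3 / 4
    unfold convExponent
    have hmem34 : ∀ t : ℝ, 3 / 4 < t →
        t ∈ {t : ℝ | 0 ≤ t ∧ Summable (fun a : mySet => (a : ℝ) ^ (-t))} := by
      intro t ht
      refine ⟨by linarith, ?_⟩
      exact summable_subtype_iff_indicator.2 (aux_summable t ht)
    have hlb : ∀ t ∈ {t : ℝ | 0 ≤ t ∧ Summable (fun a : mySet => (a : ℝ) ^ (-t))},
        3 / 4 ≤ t := by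
      rintro t ⟨ht0, hsum⟩
      by_contra hlt
      push_neg at hlt
      exact aux_not_summable t ht0 hlt (summable_subtype_iff_indicator.1 hsum)
    have hbdd : BddBelow {t : ℝ | 0 ≤ t ∧ Summable (fun a : mySet => (a : ℝ) ^ (-t))} :=
      ⟨0, fun x hx => hx.1⟩
    apply le_antisymm
    · refine le_of_forall_pos_le_add fun ε hε => ?_
      exact csInf_le hbdd (hmem34 (3 / 4 + ε) (by linarith))
    · exact le_csInf ⟨1, hmem34 1 (by norm_num)⟩ hlb
end

section
/- Let Q = ⋃_{k≥2} {k! + ik : i = 0, 1, ..., k!−1} ⊆ ℕ. Then Q contains no two consecutive integers, and for all sufficiently large ξ ≥ 1, ξ/(2ν(ξ)) ≤ #(Q ∩ [1,ξ]) ≤ 3ξ/ν(ξ), where ν(ξ) = k for ξ ∈ [k!, (k+1)!). In particular Q has zero natural density. -/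
open Filter Set

/-- The inverse factorial function `ν : [1,∞) → ℕ`, `ν(ξ) = k` for `ξ ∈ [k!, (k+1)!)`. -/
noncomputable def nuFact (ξ : ℝ) : ℕ := sSup {k : ℕ | (k.factorial : ℝ) ≤ ξ}

/-- The set `Q = ⋃_{k ≥ 2} {k! + i·k : 0 ≤ i ≤ k! − 1}`. -/
def Qset : Set ℕ :=
  {m : ℕ | ∃ k : ℕ, 2 ≤ k ∧ ∃ i : ℕ, i < k.factorial ∧ m = k.factorial + i * k}


lemma Q_bounds {m j i : ℕ} (hj : 1 ≤ j) (hi : i < j.factorial)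
    (hm : m = j.factorial + i * j) :
    j.factorial ≤ m ∧ m + j ≤ (j+1).factorial ∧ j ∣ m := by
  refine ⟨by omega, ?_, hm ▸ Dvd.dvd.add (Nat.dvd_factorial (by omega) le_rfl) ⟨i, mul_comm i j⟩⟩
  have h1 : (i+1) * j ≤ j.factorial * j := Nat.mul_le_mul_right _ hi
  have h2 : (j+1).factorial = j.factorial + j.factorial * j := by
    rw [Nat.factorial_succ]; ring
  have h3 : (i+1) * j = i * j + j := by ring
  omega

lemma nu_bddAbove (ξ : ℝ) : BddAbove {k : ℕ | (k.factorial : ℝ) ≤ ξ} := by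
  refine ⟨⌊ξ⌋₊, fun k hk => ?_⟩
  have h1 : (k : ℝ) ≤ (k.factorial : ℝ) := by exact_mod_cast Nat.self_le_factorial k
  exact Nat.le_floor (h1.trans hk)

lemma nuFact_ge {ξ : ℝ} (K : ℕ) (h : (K.factorial : ℝ) ≤ ξ) : K ≤ nuFact ξ :=
  le_csSup (nu_bddAbove ξ) h

lemma nuFact_fac_le {ξ : ℝ} (h : 1 ≤ ξ) : ((nuFact ξ).factorial : ℝ) ≤ ξ := by
  have : nuFact ξ ∈ {k : ℕ | (k.factorial : ℝ) ≤ ξ} :=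
    Nat.sSup_mem ⟨0, by simpa using h⟩ (nu_bddAbove ξ)
  exact this

lemma nuFact_lt {ξ : ℝ} (h : 1 ≤ ξ) : ξ < ((nuFact ξ + 1).factorial : ℝ) := by
  by_contra hc
  push_neg at hc
  have := nuFact_ge (nuFact ξ + 1) hc
  omega

open Finset in
noncomputable def blockF (j : ℕ) : Finset ℕ :=
  (Finset.range j.factorial).image (fun i => j.factorial + i * j)

lemma mem_blockF {m j : ℕ} :
    m ∈ blockF j ↔ ∃ i : ℕ, i < j.factorial ∧ m = j.factorial + i * j := by
  simp only [blockF, Finset.mem_image, Finset.mem_range]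
  constructor
  · rintro ⟨i, hi, rfl⟩; exact ⟨i, hi, rfl⟩
  · rintro ⟨i, hi, rfl⟩; exact ⟨i, hi, rfl⟩

lemma blockF_card {j : ℕ} (hj : 1 ≤ j) : (blockF j).card = j.factorial := by
  rw [blockF, Finset.card_image_of_injective, Finset.card_range]
  intro a b hab
  simp only [add_right_inj] at hab
  exact Nat.eq_of_mul_eq_mul_right (by omega) hab

lemma card_mult (a b d : ℕ) (hab : a ≤ b) :
    ((Finset.Ioc a b).filter (d ∣ ·)).card = b / d - a / d := by
  have h1 : (Finset.Ioc a b).filter (d ∣ ·) =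
      ((Finset.Ioc 0 b).filter (d ∣ ·)) \ ((Finset.Ioc 0 a).filter (d ∣ ·)) := by
    ext m
    simp only [Finset.mem_filter, Finset.mem_Ioc, Finset.mem_sdiff]
    by_cases hd : d ∣ m <;> simp [hd] <;> omega
  rw [h1, Finset.card_sdiff_of_subset
    (Finset.filter_subset_filter _ (Finset.Ioc_subset_Ioc_right hab)),
    Nat.Ioc_filter_dvd_card_eq_div, Nat.Ioc_filter_dvd_card_eq_div]

lemma sum_factorial_le (m : ℕ) :
    (∑ j ∈ Finset.range (m+1), j.factorial) ≤ 2 * m.factorial := by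
  induction m with
  | zero => simp
  | succ n ih =>
    rw [Finset.sum_range_succ]
    rcases Nat.eq_zero_or_pos n with rfl | hn
    · simp [Nat.factorial]
    · have h2 : 2 * n.factorial ≤ (n+1).factorial := by
        rw [Nat.factorial_succ]
        exact Nat.mul_le_mul_right _ (by omega)
      omega

set_option maxHeartbeats 1000000 in
lemma main_bounds {ξ : ℝ} (hξ : 24 ≤ ξ) :
    ξ / (2 * (nuFact ξ : ℝ)) ≤ ((Qset ∩ {m : ℕ | 1 ≤ m ∧ (m : ℝ) ≤ ξ}).ncard : ℝ) ∧
    ((Qset ∩ {m : ℕ | 1 ≤ m ∧ (m : ℝ) ≤ ξ}).ncard : ℝ) ≤ 3 * ξ / (nuFact ξ : ℝ) := by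
  classical
  have hξ1 : (1:ℝ) ≤ ξ := by linarith
  set k := nuFact ξ with hk
  have h24 : (Nat.factorial 4 : ℝ) = 24 := by norm_num [Nat.factorial]
  have hk4 : 4 ≤ k := nuFact_ge 4 (by rw [h24]; linarith)
  have hkfle : (k.factorial : ℝ) ≤ ξ := nuFact_fac_le hξ1
  have hklt : ξ < ((k+1).factorial : ℝ) := nuFact_lt hξ1
  set n := ⌊ξ⌋₊ with hn
  have hξ0 : (0:ℝ) ≤ ξ := by linarith
  have hkn : k.factorial ≤ n := Nat.le_floor hkfle
  have hnξ : (n:ℝ) ≤ ξ := Nat.floor_le hξ0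
  have hξn : ξ - 1 < (n:ℝ) := by have := Nat.lt_floor_add_one ξ; linarith
  have hnlt : n < (k+1).factorial := by
    by_contra hc; push_neg at hc
    have : ((k+1).factorial : ℝ) ≤ (n:ℝ) := by exact_mod_cast hc
    linarith
  have hk0 : 0 < k := by omega
  have hf1 : 1 ≤ (k-1).factorial := (k-1).factorial_pos
  have hf2 : 1 ≤ (k-2).factorial := (k-2).factorial_pos
  have hkf1 : 1 ≤ k.factorial := k.factorial_pos
  have ek : k - 1 + 1 = k := by omega
  have hkfac : k.factorial = k * (k-1).factorial := by
    calc k.factorial = ((k-1)+1).factorial := by rw [ek]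
      _ = ((k-1)+1) * (k-1).factorial := Nat.factorial_succ _
      _ = k * (k-1).factorial := by rw [ek]
  have hk1fac : (k+1).factorial = k.factorial + k.factorial * k := by
    rw [Nat.factorial_succ]; ring
  set F := (Finset.Icc 1 n).filter (· ∈ Qset) with hF
  have hset : Qset ∩ {m : ℕ | 1 ≤ m ∧ (m:ℝ) ≤ ξ} = ↑F := by
    ext m
    simp only [hF, Finset.coe_filter, Set.mem_inter_iff, Set.mem_setOf_eq, Finset.mem_Icc]
    constructor
    · rintro ⟨hQ, h1, h2⟩; exact ⟨⟨h1, Nat.le_floor h2⟩, hQ⟩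
    · rintro ⟨⟨h1, h2⟩, hQ⟩
      refine ⟨hQ, h1, le_trans ?_ hnξ⟩
      exact_mod_cast Nat.cast_le.mpr h2
  rw [hset, Set.ncard_coe_finset]
  set M := (Finset.Ioc (k.factorial - 1) n).filter (k ∣ ·) with hM
  have hMcard : M.card = n / k - ((k-1).factorial - 1) := by
    rw [hM, card_mult _ _ _ (by omega)]
    congr 1
    obtain ⟨g, hg⟩ : ∃ g, (k-1).factorial = g + 1 := ⟨(k-1).factorial - 1, by omega⟩
    have h4 : k * (k-1).factorial = k * g + k := by rw [hg]; ring
    rw [show k.factorial - 1 = k * g + (k-1) by omega, Nat.mul_add_div hk0,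
      Nat.div_eq_of_lt (by omega), hg]
    omega
  have hdivge : (k-1).factorial ≤ n / k :=
    (Nat.le_div_iff_mul_le hk0).2 (by rw [mul_comm]; omega)
  -- elements of M are in Qset
  have hMQ : ∀ m ∈ M, m ∈ Qset ∧ k.factorial ≤ m ∧ m ≤ n := by
    intro m hm
    rw [hM, Finset.mem_filter, Finset.mem_Ioc] at hm
    obtain ⟨⟨hm1, hm2⟩, t, rfl⟩ := hm
    have htge : (k-1).factorial ≤ t := by
      by_contra hc; push_neg at hc
      have h5 : k * t < k * (k-1).factorial :=
        mul_lt_mul_of_pos_left hc hk0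
      omega
    obtain ⟨i, hi⟩ : ∃ i, t = (k-1).factorial + i := ⟨t - (k-1).factorial, by omega⟩
    have h5 : k * t = k.factorial + i * k := by rw [hi, hkfac]; ring
    have hikb : i < k.factorial := by
      by_contra hc; push_neg at hc
      have h7 : k.factorial * k ≤ i * k := Nat.mul_le_mul_right k hc
      omega
    exact ⟨⟨k, by omega, i, hikb, h5⟩, by omega, hm2⟩
  have hblock : ∀ j m, 1 ≤ j → m ∈ blockF j →
      j.factorial ≤ m ∧ m + j ≤ (j+1).factorial := by
    intro j m hj hm
    obtain ⟨i, hi, rfl⟩ := mem_blockF.1 hm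
    exact ⟨(Q_bounds hj hi rfl).1, (Q_bounds hj hi rfl).2.1⟩
  have e1 : (k-1)+1 = k := by omega
  have e2 : (k-2)+1 = k-1 := by omega
  have hffle : (k-1).factorial ≤ k.factorial := Nat.factorial_le (by omega)
  -- lower bound : union L ⊆ F
  have hd1 : Disjoint (blockF (k-1)) (blockF (k-2)) := by
    rw [Finset.disjoint_left]
    intro m h1 h2
    have b1 := (hblock _ m (by omega) h1).1
    have b2 := (hblock _ m (by omega) h2).2
    rw [e2] at b2
    omega
  have hd2 : Disjoint (blockF (k-1) ∪ blockF (k-2)) M := by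
    rw [Finset.disjoint_left]
    intro m h1 h2
    have hge := (hMQ m h2).2.1
    rcases Finset.mem_union.1 h1 with h3 | h3
    · have b1 := (hblock _ m (by omega) h3).2
      rw [e1] at b1; omega
    · have b1 := (hblock _ m (by omega) h3).2
      rw [e2] at b1; omega
  have hLsub : (blockF (k-1) ∪ blockF (k-2)) ∪ M ⊆ F := by
    intro m hm
    rw [hF, Finset.mem_filter, Finset.mem_Icc]
    rcases Finset.mem_union.1 hm with h1 | h1
    · rcases Finset.mem_union.1 h1 with h2 | h2
      · obtain ⟨i, hi, rfl⟩ := mem_blockF.1 h2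
        have hb := Q_bounds (by omega : 1 ≤ k-1) hi rfl
        rw [e1] at hb
        exact ⟨⟨by omega, by omega⟩, ⟨k-1, by omega, i, hi, rfl⟩⟩
      · obtain ⟨i, hi, rfl⟩ := mem_blockF.1 h2
        have hb := Q_bounds (by omega : 1 ≤ k-2) hi rfl
        rw [e2] at hb
        exact ⟨⟨by omega, by omega⟩, ⟨k-2, by omega, i, hi, rfl⟩⟩
    · obtain ⟨hQ, hge, hle⟩ := hMQ m h1
      exact ⟨⟨by omega, hle⟩, hQ⟩
  have hLcard : ((blockF (k-1) ∪ blockF (k-2)) ∪ M).card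
      = (k-1).factorial + (k-2).factorial + M.card := by
    rw [Finset.card_union_of_disjoint hd2, Finset.card_union_of_disjoint hd1,
      blockF_card (by omega), blockF_card (by omega)]
  have hlo : (k-1).factorial + (k-2).factorial + M.card ≤ F.card := by
    rw [← hLcard]; exact Finset.card_le_card hLsub
  -- upper bound
  have hFsub : F ⊆ ((Finset.Icc 2 (k-1)).biUnion blockF) ∪ M := by
    intro m hm
    rw [hF, Finset.mem_filter, Finset.mem_Icc] at hm
    obtain ⟨⟨h1, h2⟩, j, hj2, i, hi, hmeq⟩ := hm
    have hb := Q_bounds (by omega : 1 ≤ j) hi hmeq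
    have hjk : j ≤ k := by
      by_contra hc; push_neg at hc
      have : (k+1).factorial ≤ j.factorial := Nat.factorial_le (by omega)
      omega
    rw [Finset.mem_union]
    rcases eq_or_lt_of_le hjk with rfl | hjlt
    · right
      rw [hM, Finset.mem_filter, Finset.mem_Ioc]
      exact ⟨⟨by omega, h2⟩, hb.2.2⟩
    · left
      exact Finset.mem_biUnion.2 ⟨j, Finset.mem_Icc.2 ⟨hj2, by omega⟩,
        mem_blockF.2 ⟨i, hi, hmeq⟩⟩
  have hsum : ∑ j ∈ Finset.Icc 2 (k-1), (blockF j).card ≤ 2 * (k-1).factorial := by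
    calc ∑ j ∈ Finset.Icc 2 (k-1), (blockF j).card
        = ∑ j ∈ Finset.Icc 2 (k-1), j.factorial :=
          Finset.sum_congr rfl (fun j hj => blockF_card (by
            have := (Finset.mem_Icc.1 hj).1; omega))
      _ ≤ ∑ j ∈ Finset.range ((k-1)+1), j.factorial := by
          apply Finset.sum_le_sum_of_subset
          intro j hj
          rw [Finset.mem_range]
          have := (Finset.mem_Icc.1 hj).2; omega
      _ ≤ 2 * (k-1).factorial := sum_factorial_le (k-1)
  have hup : F.card ≤ 2 * (k-1).factorial + M.card := by
    calc F.card ≤ (((Finset.Icc 2 (k-1)).biUnion blockF) ∪ M).card :=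
          Finset.card_le_card hFsub
      _ ≤ ((Finset.Icc 2 (k-1)).biUnion blockF).card + M.card := Finset.card_union_le _ _
      _ ≤ (∑ j ∈ Finset.Icc 2 (k-1), (blockF j).card) + M.card :=
          Nat.add_le_add_right (Finset.card_biUnion_le) _
      _ ≤ 2 * (k-1).factorial + M.card := Nat.add_le_add_right hsum _
  -- pass to nat inequalities with n/k
  have hlo2 : (k-2).factorial + n/k + 1 ≤ F.card := by omega
  have hup2 : F.card ≤ (k-1).factorial + n/k + 1 := by omega
  -- real estimates
  have hkR : (4:ℝ) ≤ (k:ℝ) := by exact_mod_cast hk4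
  have hkR0 : (0:ℝ) < (k:ℝ) := by linarith
  have hq_le : ((n/k : ℕ) : ℝ) ≤ ξ / (k:ℝ) := by
    rw [le_div_iff₀ hkR0]
    have h1 : (n/k) * k ≤ n := Nat.div_mul_le_self n k
    have h2 : (((n/k) * k : ℕ) : ℝ) ≤ (n:ℝ) := by exact_mod_cast h1
    push_cast at h2
    linarith
  have hq_ge : ξ / (k:ℝ) - 2 ≤ ((n/k : ℕ) : ℝ) := by
    have h1 : n < k * (n/k) + k := by
      have := Nat.div_add_mod n k
      have := Nat.mod_lt n hk0
      omega
    have h2 : (n:ℝ) < (k:ℝ) * ((n/k : ℕ):ℝ) + (k:ℝ) := by exact_mod_cast h1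
    rw [sub_le_iff_le_add, div_le_iff₀ hkR0]
    nlinarith
  have hf1_le : ((k-1).factorial : ℝ) ≤ ξ / (k:ℝ) := by
    rw [le_div_iff₀ hkR0]
    have : ((k.factorial : ℕ) : ℝ) = (k:ℝ) * ((k-1).factorial : ℝ) := by
      exact_mod_cast hkfac
    nlinarith
  have hf1R : (1:ℝ) ≤ ((k-1).factorial : ℝ) := by exact_mod_cast hf1
  have hf2R : (1:ℝ) ≤ ((k-2).factorial : ℝ) := by exact_mod_cast hf2
  have hloR : ((k-2).factorial : ℝ) + ((n/k : ℕ):ℝ) + 1 ≤ (F.card : ℝ) := by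
    exact_mod_cast hlo2
  have hupR : (F.card : ℝ) ≤ ((k-1).factorial : ℝ) + ((n/k : ℕ):ℝ) + 1 := by
    exact_mod_cast hup2
  clear_value F n k
  constructor
  · have h1 : ξ / (k:ℝ) ≤ (F.card : ℝ) := by linarith only [hloR, hq_ge, hf2R]
    have h2 : ξ / (2 * (k:ℝ)) = (ξ / (k:ℝ)) / 2 := by ring
    rw [h2]
    calc (ξ / (k:ℝ)) / 2 ≤ ξ / (k:ℝ) := half_le_self (div_nonneg hξ0 hkR0.le)
      _ ≤ _ := h1
  · have h3 : 3 * ξ / (k:ℝ) = 3 * (ξ / (k:ℝ)) := by ring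
    rw [h3]
    linarith only [hupR, hq_le, hf1_le, hf1R]

/-- `Q` contains no two consecutive integers; for all large real `ξ ≥ 1` one has
`ξ/(2 ν(ξ)) ≤ #(Q ∩ [1,ξ]) ≤ 3 ξ / ν(ξ)`; and `Q` has natural density zero. -/
theorem stmt8 :
    (∀ n : ℕ, ¬(n ∈ Qset ∧ n + 1 ∈ Qset)) ∧
      (∀ᶠ ξ : ℝ in Filter.atTop,
        ξ / (2 * (nuFact ξ : ℝ)) ≤ ((Qset ∩ {m : ℕ | 1 ≤ m ∧ (m : ℝ) ≤ ξ}).ncard : ℝ) ∧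
        ((Qset ∩ {m : ℕ | 1 ≤ m ∧ (m : ℝ) ≤ ξ}).ncard : ℝ) ≤ 3 * ξ / (nuFact ξ : ℝ)) ∧
      Filter.Tendsto (fun N : ℕ => ((Qset ∩ Set.Icc 1 N).ncard : ℝ) / N)
        Filter.atTop (nhds 0) := by
  refine ⟨?_, ?_, ?_⟩
  · rintro n ⟨⟨j, hj2, i, hi, hn⟩, ⟨j', hj2', i', hi', hn'⟩⟩
    obtain ⟨b1, b2, b3⟩ := Q_bounds (by omega) hi hn
    obtain ⟨c1, c2, c3⟩ := Q_bounds (by omega) hi' hn'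
    rcases lt_trichotomy j j' with h | h | h
    · have : (j+1).factorial ≤ j'.factorial := Nat.factorial_le (by omega)
      omega
    · subst h
      have hd : j ∣ 1 := by simpa using Nat.dvd_sub c3 b3
      have := Nat.le_of_dvd one_pos hd
      omega
    · have : (j'+1).factorial ≤ j.factorial := Nat.factorial_le (by omega)
      omega
  · filter_upwards [eventually_ge_atTop (24:ℝ)] with ξ hξ
    exact main_bounds hξ
  · have hν : Tendsto (fun N : ℕ => nuFact (N:ℝ)) atTop atTop := by
      rw [tendsto_atTop]
      intro K
      filter_upwards [eventually_ge_atTop K.factorial] with N hN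
      exact nuFact_ge K (by exact_mod_cast hN)
    have hg : Tendsto (fun N : ℕ => 3 / (nuFact (N:ℝ) : ℝ)) atTop (nhds 0) :=
      (tendsto_const_div_atTop_nhds_zero_nat 3).comp hν
    apply squeeze_zero' (g := fun N : ℕ => 3 / (nuFact (N:ℝ) : ℝ)) ?_ ?_ hg
    · exact Eventually.of_forall fun N => div_nonneg (Nat.cast_nonneg _) (Nat.cast_nonneg _)
    · filter_upwards [eventually_ge_atTop 24] with N hN
      have hNR : (24:ℝ) ≤ (N:ℝ) := by exact_mod_cast hN
      have h := (main_bounds hNR).2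
      have hEq : Qset ∩ Set.Icc 1 N = Qset ∩ {m : ℕ | 1 ≤ m ∧ (m:ℝ) ≤ (N:ℝ)} := by
        ext m
        simp [Set.mem_Icc, Nat.cast_le]
      rw [hEq]
      have h24 : (Nat.factorial 4 : ℝ) = 24 := by norm_num [Nat.factorial]
      have hk4 : 4 ≤ nuFact (N:ℝ) := nuFact_ge 4 (by rw [h24]; exact hNR)
      have hkR : (0:ℝ) < ((nuFact (N:ℝ)) : ℝ) := by
        have : (4:ℝ) ≤ ((nuFact (N:ℝ)) : ℝ) := by exact_mod_cast hk4
        linarith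
      have hN0 : (0:ℝ) < (N:ℝ) := by linarith
      calc ((Qset ∩ {m : ℕ | 1 ≤ m ∧ (m:ℝ) ≤ (N:ℝ)}).ncard : ℝ) / (N:ℝ)
          ≤ (3 * (N:ℝ) / ((nuFact (N:ℝ)):ℝ)) / (N:ℝ) := by gcongr
        _ = 3 / ((nuFact (N:ℝ)):ℝ) := by field_simp
end

section
/- Let S ⊆ ℕ be an infinite set of positive upper density. Then the set of x in J = {x ∈ (0,1)∖ℚ : aₙ(x) < a_{n+1}(x) for all n ≥ 1} such that {aₙ(x) : n ∈ ℕ} ∩ S has positive upper density is of Hausdorff dimension 0. -/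
set_option maxHeartbeats 1000000

open Filter Set

/-- The Gauss map `x ↦ {1/x}`. -/
noncomputable def gaussMap (x : ℝ) : ℝ := Int.fract x⁻¹

/-- The `(n+1)`-st regular continued fraction digit of `x` (so `cfDigit 0 x = a₁(x)`). -/
noncomputable def cfDigit (n : ℕ) (x : ℝ) : ℕ := ⌊(gaussMap^[n] x)⁻¹⌋₊

/-- The upper density `d̄(A) = limsup_{N→∞} #(A ∩ [1,N]) / N`. -/
noncomputable def upperDensity (A : Set ℕ) : ℝ :=
  Filter.limsup (fun N : ℕ => ((A ∩ Set.Icc 1 N).ncard : ℝ) / N) Filter.atTop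

lemma cfDigit_succ (n : ℕ) (x : ℝ) : cfDigit (n+1) x = cfDigit n (gaussMap x) := by
  simp [cfDigit, Function.iterate_succ_apply]

lemma gaussMap_mem (x : ℝ) : gaussMap x ∈ Set.Ico (0:ℝ) 1 :=
  ⟨Int.fract_nonneg _, Int.fract_lt_one _⟩

lemma gauss_decomp {x : ℝ} (hx : 0 < x) : x⁻¹ = (cfDigit 0 x : ℝ) + gaussMap x := by
  have h1 : (0:ℝ) ≤ x⁻¹ := by positivity
  have : ((⌊x⁻¹⌋₊ : ℝ)) = (⌊x⁻¹⌋ : ℝ) := natCast_floor_eq_intCast_floor h1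
  simp only [cfDigit, Function.iterate_zero, id_eq, gaussMap, Int.fract]
  rw [this]; ring

lemma digit_pos_ne_zero {x : ℝ} (h : 1 ≤ cfDigit 0 x) : x ≠ 0 := by
  intro hx
  simp [cfDigit, hx] at h

lemma keyA : ∀ (n : ℕ) (x y : ℝ), x ∈ Set.Ico (0:ℝ) 1 → y ∈ Set.Ico (0:ℝ) 1 →
    (∀ i, i < n → 1 ≤ cfDigit i x) → (∀ i, i < n → cfDigit i x = cfDigit i y) →
    |x - y| ≤ ∏ i ∈ Finset.range n, ((cfDigit i x : ℝ)⁻¹)^2 := by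
  intro n
  induction n with
  | zero =>
    intro x y hx hy _ _
    simp only [Finset.range_zero, Finset.prod_empty]
    rw [abs_sub_le_iff]
    constructor <;> nlinarith [hx.1, hx.2, hy.1, hy.2]
  | succ n ih =>
    intro x y hx hy hpos heq
    have ha : 1 ≤ cfDigit 0 x := hpos 0 (Nat.succ_pos n)
    have hxne : x ≠ 0 := digit_pos_ne_zero ha
    have hyne : y ≠ 0 := digit_pos_ne_zero (heq 0 (Nat.succ_pos n) ▸ ha)
    have hx0 : 0 < x := lt_of_le_of_ne hx.1 (Ne.symm hxne)
    have hy0 : 0 < y := lt_of_le_of_ne hy.1 (Ne.symm hyne)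
    set a : ℕ := cfDigit 0 x with hadef
    set u : ℝ := gaussMap x with hu
    set v : ℝ := gaussMap y with hv
    have hxd : x⁻¹ = (a:ℝ) + u := gauss_decomp hx0
    have hyd : y⁻¹ = (a:ℝ) + v := by
      rw [gauss_decomp hy0, ← heq 0 (Nat.succ_pos n)]
    have hu01 := gaussMap_mem x
    have hv01 := gaussMap_mem y
    have har : (1:ℝ) ≤ (a:ℝ) := by exact_mod_cast ha
    have hIH : |u - v| ≤ ∏ i ∈ Finset.range n, ((cfDigit i u : ℝ)⁻¹)^2 := by
      apply ih u v hu01 hv01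
      · intro i hi
        rw [← cfDigit_succ]
        exact hpos (i+1) (Nat.succ_lt_succ hi)
      · intro i hi
        rw [← cfDigit_succ, ← cfDigit_succ]
        exact heq (i+1) (Nat.succ_lt_succ hi)
    have hau : (0:ℝ) < (a:ℝ) + u := by linarith [hu01.1]
    have hav : (0:ℝ) < (a:ℝ) + v := by linarith [hv01.1]
    have hxeq : x = ((a:ℝ) + u)⁻¹ := by rw [← hxd, inv_inv]
    have hyeq : y = ((a:ℝ) + v)⁻¹ := by rw [← hyd, inv_inv]
    have hsub : x - y = (v - u) / (((a:ℝ) + u) * ((a:ℝ) + v)) := by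
      rw [hxeq, hyeq]; field_simp; ring
    have habs : |x - y| = |u - v| / (((a:ℝ) + u) * ((a:ℝ) + v)) := by
      rw [hsub, abs_div, abs_sub_comm u v, abs_of_pos (mul_pos hau hav)]
    have hstep : |x - y| ≤ ((a:ℝ)⁻¹)^2 * |u - v| := by
      rw [habs, div_le_iff₀ (mul_pos hau hav)]
      have h1 : (a:ℝ)^2 ≤ ((a:ℝ) + u) * ((a:ℝ) + v) := by nlinarith [hu01.1, hv01.1]
      have h2 : (0:ℝ) ≤ |u - v| := abs_nonneg _
      have h3 : (0:ℝ) < (a:ℝ) := by linarith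
      have h4 : ((a:ℝ)⁻¹)^2 * (a:ℝ)^2 = 1 := by field_simp
      nlinarith [mul_le_mul_of_nonneg_left h1 (mul_nonneg (by positivity : (0:ℝ) ≤ ((a:ℝ)⁻¹)^2) h2)]
    calc |x - y| ≤ ((a:ℝ)⁻¹)^2 * |u - v| := hstep
      _ ≤ ((a:ℝ)⁻¹)^2 * ∏ i ∈ Finset.range n, ((cfDigit i u : ℝ)⁻¹)^2 := by
          apply mul_le_mul_of_nonneg_left hIH (by positivity)
      _ = ∏ i ∈ Finset.range (n+1), ((cfDigit i x : ℝ)⁻¹)^2 := by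
          rw [Finset.prod_range_succ']
          have hc : ∀ i ∈ Finset.range n, ((cfDigit (i+1) x : ℝ)⁻¹)^2 = ((cfDigit i u : ℝ)⁻¹)^2 :=
            fun i _ => by rw [cfDigit_succ]
          rw [Finset.prod_congr rfl hc]
          ring

lemma digit_one_le {x : ℝ} (hx : x ∈ Set.Ioo (0:ℝ) 1) : 1 ≤ cfDigit 0 x := by
  have h1 : (1:ℝ) ≤ x⁻¹ := (one_le_inv_iff₀).mpr ⟨hx.1, le_of_lt hx.2⟩
  have h2 : 0 < ⌊x⁻¹⌋₊ := Nat.floor_pos.mpr h1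
  have h3 : cfDigit 0 x = ⌊x⁻¹⌋₊ := by simp [cfDigit]
  omega

lemma digit_ge {x : ℝ} (hx : x ∈ Set.Ioo (0:ℝ) 1) (hm : StrictMono (fun i => cfDigit i x)) :
    ∀ n, n + 1 ≤ cfDigit n x := by
  intro n
  induction n with
  | zero => simpa using digit_one_le hx
  | succ n ih =>
    have h2 : cfDigit n x < cfDigit (n+1) x := hm (by omega : n < n + 1)
    omega

/-- Cylinder set indexed by a finset of digit values. -/
def cyl (F : Finset ℕ) : Set ℝ :=
  {x | x ∈ Set.Ioo (0:ℝ) 1 ∧ StrictMono (fun i => cfDigit i x) ∧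
    Finset.image (fun i => cfDigit i x) (Finset.range F.card) = F}

lemma cyl_digits_eq {F : Finset ℕ} {x y : ℝ} (hx : x ∈ cyl F) (hy : y ∈ cyl F) :
    ∀ i, i < F.card → cfDigit i x = cfDigit i y := by
  obtain ⟨hx1, hx2, hx3⟩ := hx
  obtain ⟨hy1, hy2, hy3⟩ := hy
  have key : ∀ z : ℝ, z ∈ Set.Ioo (0:ℝ) 1 → StrictMono (fun i => cfDigit i z) →
      Finset.image (fun i => cfDigit i z) (Finset.range F.card) = F →
      (fun i : Fin F.card => cfDigit i.val z) = F.orderEmbOfFin rfl := by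
    intro z hz1 hz2 hz3
    apply Finset.orderEmbOfFin_unique rfl
    · intro i
      have hmem : cfDigit i.val z ∈ Finset.image (fun j => cfDigit j z) (Finset.range F.card) :=
        Finset.mem_image.mpr ⟨i.val, Finset.mem_range.mpr i.isLt, rfl⟩
      rwa [hz3] at hmem
    · exact hz2.comp (fun a b h => h)
  intro i hi
  have h1 := congrFun (key x hx1 hx2 hx3) ⟨i, hi⟩
  have h2 := congrFun (key y hy1 hy2 hy3) ⟨i, hi⟩
  simp only at h1 h2
  rw [h1, h2]

lemma cyl_diam (F : Finset ℕ) :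
    EMetric.diam (cyl F) ≤ ENNReal.ofReal (((Nat.factorial F.card : ℝ)⁻¹)^2) := by
  apply EMetric.diam_le
  intro x hx y hy
  rw [edist_dist, Real.dist_eq]
  apply ENNReal.ofReal_le_ofReal
  have hb := keyA F.card x y (Set.Ico_subset_Ico_right le_rfl ⟨le_of_lt hx.1.1, hx.1.2⟩)
    ⟨le_of_lt hy.1.1, hy.1.2⟩
    (fun i hi => le_trans (Nat.le_add_left 1 i) (digit_ge hx.1 hx.2.1 i))
    (cyl_digits_eq hx hy)
  refine le_trans hb ?_
  have hfac : ∏ i ∈ Finset.range F.card, (((i:ℝ)+1)⁻¹)^2 = ((Nat.factorial F.card : ℝ)⁻¹)^2 := by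
    rw [Finset.prod_pow, Finset.prod_inv_distrib]
    congr 2
    exact_mod_cast Finset.prod_range_add_one_eq_factorial F.card
  rw [← hfac]
  apply Finset.prod_le_prod
  · intro i _; positivity
  · intro i _
    have hd : (i:ℝ) + 1 ≤ (cfDigit i x : ℝ) := by
      exact_mod_cast digit_ge hx.1 hx.2.1 i
    have : ((cfDigit i x : ℝ))⁻¹ ≤ ((i:ℝ)+1)⁻¹ := by
      apply inv_anti₀ (by positivity) hd
    exact pow_le_pow_left₀ (by positivity) this 2

lemma exists_k {x : ℝ} (hx : x ∈ Set.Ioo (0:ℝ) 1) (hm : StrictMono (fun i => cfDigit i x))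
    {A : Set ℕ} (hA : ∀ a ∈ A, ∃ n, cfDigit n x = a) (hd : 0 < upperDensity A) :
    ∃ k : ℕ, ∀ m : ℕ, ∃ n, m ≤ n ∧ cfDigit n x ≤ k * (n + 1) := by
  classical
  set δ := upperDensity A with hδdef
  set u : ℕ → ℝ := fun N => ((A ∩ Set.Icc 1 N).ncard : ℝ) / N with hu
  have hbdd : Filter.IsBoundedUnder (· ≥ ·) Filter.atTop u :=
    ⟨0, by rw [Filter.eventually_map]; exact Filter.Eventually.of_forall fun N => div_nonneg (Nat.cast_nonneg _) (Nat.cast_nonneg _)⟩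
  have hco : Filter.IsCoboundedUnder (· ≤ ·) Filter.atTop u :=
    hbdd.isCoboundedUnder_le
  have hfreq : ∃ᶠ N in Filter.atTop, δ/2 < u N :=
    frequently_lt_of_lt_limsup hco (by rw [hδdef]; exact half_lt_self hd)
  refine ⟨⌈2/δ⌉₊, fun m => ?_⟩
  have hδ2 : 0 < δ/2 := half_pos hd
  obtain ⟨N, hN₀, hN⟩ := (Filter.frequently_atTop.mp hfreq) ⌈((m:ℝ)+1)/(δ/2)⌉₊
  -- basic facts about N
  have hNpos : 0 < N := by
    rcases Nat.eq_zero_or_pos N with h | h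
    · exfalso; rw [h] at hN; simp [hu] at hN; linarith
    · exact h
  set c := (A ∩ Set.Icc 1 N).ncard with hc
  have hcN : (δ/2) * N < c := by
    have hNR : (0:ℝ) < N := by exact_mod_cast hNpos
    have := hN
    rw [hu] at this
    calc (δ/2) * N < ((c:ℝ)/N) * N := by exact mul_lt_mul_of_pos_right this hNR
      _ = c := by field_simp
  have hmN : ((m:ℝ)+1) ≤ (δ/2) * N := by
    have h1 : ((m:ℝ)+1)/(δ/2) ≤ (⌈((m:ℝ)+1)/(δ/2)⌉₊ : ℝ) := Nat.le_ceil _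
    have h2 : ((⌈((m:ℝ)+1)/(δ/2)⌉₊ : ℕ) : ℝ) ≤ (N:ℝ) := by exact_mod_cast hN₀
    calc ((m:ℝ)+1) = (((m:ℝ)+1)/(δ/2)) * (δ/2) := by field_simp
      _ ≤ (N:ℝ) * (δ/2) := mul_le_mul_of_nonneg_right (h1.trans h2) (le_of_lt hδ2)
      _ = (δ/2) * N := mul_comm _ _
  -- the set of indices with digit ≤ N
  set T := (Finset.range N).filter (fun n => cfDigit n x ≤ N) with hT
  have hcT : c ≤ T.card := by
    rw [hc, ← Set.ncard_coe_finset]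
    apply Set.ncard_le_ncard_of_injOn (fun a => if h : ∃ n, cfDigit n x = a then h.choose else 0)
    · intro a ha
      have haA : a ∈ A := ha.1
      have haN : a ≤ N := ha.2.2
      have hex : ∃ n, cfDigit n x = a := hA a haA
      simp only [dif_pos hex]
      have hval : cfDigit hex.choose x = a := hex.choose_spec
      have hlt : hex.choose < N := by
        have := digit_ge hx hm hex.choose
        omega
      rw [Finset.mem_coe, hT, Finset.mem_filter, Finset.mem_range]
      exact ⟨hlt, by omega⟩
    · intro a ha b hb hab
      have hexa : ∃ n, cfDigit n x = a := hA a ha.1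
      have hexb : ∃ n, cfDigit n x = b := hA b hb.1
      simp only [dif_pos hexa, dif_pos hexb] at hab
      rw [← hexa.choose_spec, ← hexb.choose_spec, hab]
  have hcpos : 0 < c := by
    rcases Nat.eq_zero_or_pos c with h | h
    · exfalso
      rw [h] at hcN
      have hNR : (0:ℝ) < (N:ℝ) := by exact_mod_cast hNpos
      simp only [Nat.cast_zero] at hcN
      nlinarith
    · exact h
  have hTne : T.Nonempty := Finset.card_pos.mp (lt_of_lt_of_le hcpos hcT)
  set n := T.max' hTne with hn
  have hnT : n ∈ T := T.max'_mem hTne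
  have hdig : cfDigit n x ≤ N := (Finset.mem_filter.mp hnT).2
  have hTsub : T ⊆ Finset.range (n+1) := by
    intro t ht
    rw [Finset.mem_range]
    exact Nat.lt_succ_of_le (T.le_max' t ht)
  have hTcard : T.card ≤ n + 1 := le_trans (Finset.card_le_card hTsub) (by simp)
  have hcn : (c:ℝ) ≤ (n:ℝ) + 1 := by exact_mod_cast le_trans hcT hTcard
  refine ⟨n, ?_, ?_⟩
  · -- m ≤ n
    have hmn : (m:ℝ) < (n:ℝ) := by linarith
    have : m < n := by exact_mod_cast hmn
    omega
  · -- cfDigit n x ≤ k * (n+1)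
    have hk : 2/δ ≤ (⌈2/δ⌉₊ : ℝ) := Nat.le_ceil _
    have hNle : (N:ℝ) ≤ (⌈2/δ⌉₊ : ℝ) * ((n:ℝ)+1) := by
      have h1 : (N:ℝ) < (2/δ) * ((n:ℝ)+1) := by
        have h2 : (δ/2) * N < (n:ℝ)+1 := lt_of_lt_of_le hcN hcn
        calc (N:ℝ) = (2/δ) * ((δ/2) * N) := by field_simp
          _ < (2/δ) * ((n:ℝ)+1) := by
              apply mul_lt_mul_of_pos_left h2 (by positivity)
      have h3 : (2/δ) * ((n:ℝ)+1) ≤ (⌈2/δ⌉₊ : ℝ) * ((n:ℝ)+1) :=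
        mul_le_mul_of_nonneg_right hk (by positivity)
      linarith
    have : (N:ℝ) ≤ ((⌈2/δ⌉₊ * (n+1) : ℕ) : ℝ) := by push_cast; linarith
    have hNn : N ≤ ⌈2/δ⌉₊ * (n+1) := by exact_mod_cast this
    omega

open MeasureTheory in
def Ek (k : ℕ) : Set ℝ :=
  {x : ℝ | x ∈ Set.Ioo (0:ℝ) 1 ∧ StrictMono (fun i => cfDigit i x) ∧
    ∀ m : ℕ, ∃ n, m ≤ n ∧ cfDigit n x ≤ k * (n + 1)}

def fam (k n : ℕ) : Finset (Finset ℕ) :=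
  (Finset.Icc 1 (k*(n+1))).powerset.filter (fun F => F.card = n+1)

noncomputable def tset (k : ℕ) (n₀ : ℕ) (p : ℕ × Finset ℕ) : Set ℝ :=
  if n₀ ≤ p.1 ∧ p.2 ∈ fam k p.1 then cyl p.2 else ∅

noncomputable def rad (n₀ : ℕ) : ENNReal :=
  ENNReal.ofReal (((Nat.factorial (n₀+1) : ℝ)⁻¹)^2)

lemma fam_card_le (k n : ℕ) : (fam k n).card ≤ 2^(k*(n+1)) := by
  calc (fam k n).card ≤ (Finset.Icc 1 (k*(n+1))).powerset.card :=
        Finset.card_le_card (Finset.filter_subset _ _)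
    _ = 2^(Finset.Icc 1 (k*(n+1))).card := Finset.card_powerset _
    _ = 2^(k*(n+1)) := by rw [Nat.card_Icc]; simp

lemma Ek_subset_cover (k n₀ : ℕ) : Ek k ⊆ ⋃ p : ℕ × Finset ℕ, tset k n₀ p := by
  intro x hx
  obtain ⟨hx1, hx2, hx3⟩ := hx
  obtain ⟨n, hn₀, hdig⟩ := hx3 n₀
  set F := Finset.image (fun i => cfDigit i x) (Finset.range (n+1)) with hF
  have hcard : F.card = n + 1 := by
    rw [hF, Finset.card_image_of_injective _ hx2.injective, Finset.card_range]
  have hFfam : F ∈ fam k n := by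
    rw [fam, Finset.mem_filter, Finset.mem_powerset]
    refine ⟨?_, hcard⟩
    intro a ha
    rw [hF] at ha
    obtain ⟨i, hi, rfl⟩ := Finset.mem_image.mp ha
    rw [Finset.mem_range] at hi
    rw [Finset.mem_Icc]
    constructor
    · have := digit_ge hx1 hx2 i; omega
    · calc cfDigit i x ≤ cfDigit n x := hx2.monotone (by omega)
        _ ≤ k * (n+1) := hdig
  rw [Set.mem_iUnion]
  refine ⟨(n, F), ?_⟩
  rw [tset, if_pos ⟨hn₀, hFfam⟩]
  exact ⟨hx1, hx2, by rw [hcard]⟩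

lemma tset_diam_le (k n₀ : ℕ) (p : ℕ × Finset ℕ) :
    EMetric.diam (tset k n₀ p) ≤ rad n₀ := by
  rw [tset]
  split_ifs with h
  · obtain ⟨hn, hFf⟩ := h
    have hcard : p.2.card = p.1 + 1 := (Finset.mem_filter.mp hFf).2
    refine le_trans (cyl_diam p.2) ?_
    rw [rad]
    apply ENNReal.ofReal_le_ofReal
    have hfle : Nat.factorial (n₀+1) ≤ Nat.factorial (p.2.card) := by
      rw [hcard]; exact Nat.factorial_le (by omega)
    have h1 : ((Nat.factorial p.2.card : ℝ))⁻¹ ≤ ((Nat.factorial (n₀+1) : ℝ))⁻¹ := by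
      apply inv_anti₀
      · exact_mod_cast Nat.factorial_pos _
      · exact_mod_cast hfle
    apply pow_le_pow_left₀ (by positivity) h1
  · simp [EMetric.diam]

lemma rad_tendsto : Filter.Tendsto rad Filter.atTop (nhds 0) := by
  have h1 : Filter.Tendsto (fun n : ℕ => (((Nat.factorial (n+1) : ℝ))⁻¹)^2) Filter.atTop (nhds 0) := by
    apply squeeze_zero (fun n => by positivity) (g := fun n : ℕ => ((n:ℝ)+1)⁻¹)
    · intro n
      have hf : ((n:ℝ)+1) ≤ (Nat.factorial (n+1) : ℝ) := by
        exact_mod_cast Nat.self_le_factorial (n+1)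
      have h2 : ((Nat.factorial (n+1) : ℝ))⁻¹ ≤ ((n:ℝ)+1)⁻¹ :=
        inv_anti₀ (by positivity) hf
      have h3 : ((Nat.factorial (n+1) : ℝ))⁻¹ ≤ 1 := by
        rw [inv_le_one_iff₀]; right; exact_mod_cast Nat.one_le_iff_ne_zero.mpr (Nat.factorial_pos _).ne'
      calc (((Nat.factorial (n+1) : ℝ))⁻¹)^2 ≤ ((Nat.factorial (n+1) : ℝ))⁻¹ := by nlinarith [inv_nonneg.mpr (le_of_lt (by exact_mod_cast Nat.factorial_pos (n+1) : (0:ℝ) < Nat.factorial (n+1)))]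
        _ ≤ ((n:ℝ)+1)⁻¹ := h2
    · have := tendsto_one_div_add_atTop_nhds_zero_nat (𝕜 := ℝ)
      simpa [one_div] using this
  have h2 := ENNReal.tendsto_ofReal h1
  rw [ENNReal.ofReal_zero] at h2
  exact h2

noncomputable def bR (k : ℕ) (s : ℝ) (n : ℕ) : ℝ :=
  (2:ℝ)^(k*(n+1)) * (((Nat.factorial (n+1) : ℝ)⁻¹)^2)^s

lemma bR_pos (k : ℕ) (s : ℝ) (n : ℕ) : 0 < bR k s n := by
  have h : (0:ℝ) < ((Nat.factorial (n+1) : ℝ)⁻¹)^2 := by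
    have : (0:ℝ) < (Nat.factorial (n+1) : ℝ) := by exact_mod_cast Nat.factorial_pos _
    positivity
  have := Real.rpow_pos_of_pos h s
  rw [bR]
  positivity

lemma bR_summable (k : ℕ) {s : ℝ} (hs : 0 < s) : Summable (bR k s) := by
  apply summable_of_ratio_test_tendsto_lt_one (l := 0) zero_lt_one
    (Filter.Eventually.of_forall fun n => (bR_pos k s n).ne')
  have hratio : ∀ n : ℕ, ‖bR k s (n+1)‖ / ‖bR k s n‖ = 2^k * ((((n:ℝ)+2)⁻¹)^2)^s := by
    intro n
    rw [Real.norm_eq_abs, Real.norm_eq_abs, abs_of_pos (bR_pos k s (n+1)),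
      abs_of_pos (bR_pos k s n)]
    have hP : (0:ℝ) < (Nat.factorial (n+1) : ℝ) := by exact_mod_cast Nat.factorial_pos _
    have hfact : ((Nat.factorial (n+2) : ℝ)) = ((n:ℝ)+2) * (Nat.factorial (n+1) : ℝ) := by
      rw [Nat.factorial_succ (n+1)]; push_cast; ring
    have hQ : (0:ℝ) < (n:ℝ)+2 := by positivity
    have hB : (((Nat.factorial (n+2) : ℝ)⁻¹)^2)^s
        = ((((n:ℝ)+2)⁻¹)^2)^s * (((Nat.factorial (n+1) : ℝ)⁻¹)^2)^s := by
      rw [hfact, mul_inv, mul_pow, Real.mul_rpow (by positivity) (by positivity)]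
    have hA : (2:ℝ)^(k*(n+1+1)) = (2:ℝ)^(k*(n+1)) * 2^k := by
      rw [← pow_add]; ring_nf
    have hBpos : (0:ℝ) < (((Nat.factorial (n+1) : ℝ)⁻¹)^2)^s :=
      Real.rpow_pos_of_pos (by positivity) s
    rw [bR, bR, hB, hA]
    field_simp
  have htend : Filter.Tendsto (fun n : ℕ => 2^k * ((((n:ℝ)+2)⁻¹)^2)^s)
      Filter.atTop (nhds 0) := by
    have h1 : Filter.Tendsto (fun n : ℕ => ((n:ℝ)+2)⁻¹) Filter.atTop (nhds 0) := by
      have hb : Filter.Tendsto (fun n : ℕ => ((n:ℝ)) + 2) Filter.atTop Filter.atTop :=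
        Filter.tendsto_atTop_add_const_right Filter.atTop 2 tendsto_natCast_atTop_atTop
      exact Filter.Tendsto.comp tendsto_inv_atTop_zero hb
    have h2 : Filter.Tendsto (fun n : ℕ => (((n:ℝ)+2)⁻¹)^2) Filter.atTop (nhds 0) := by
      have := h1.pow 2
      simpa using this
    have h3 : Filter.Tendsto (fun y : ℝ => y ^ s) (nhds 0) (nhds 0) := by
      have hc := (Real.continuousAt_rpow_const 0 s (Or.inr hs.le)).tendsto
      rwa [Real.zero_rpow hs.ne'] at hc
    have h4 := (h3.comp h2).const_mul ((2:ℝ)^k)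
    simpa using h4
  exact Filter.Tendsto.congr (fun n => (hratio n).symm) htend

noncomputable def cseq (k : ℕ) (s : ℝ) (n : ℕ) : ENNReal := ENNReal.ofReal (bR k s n)

lemma cseq_ne_top (k : ℕ) {s : ℝ} (hs : 0 < s) : ∑' n, cseq k s n ≠ ⊤ := by
  simp only [cseq]
  rw [← ENNReal.ofReal_tsum_of_nonneg (fun n => (bR_pos k s n).le) (bR_summable k hs)]
  exact ENNReal.ofReal_ne_top

open MeasureTheory

lemma inner_le (k n₀ n : ℕ) {s : ℝ} (hs : 0 < s) (hn : n₀ ≤ n) :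
    ∑' F : Finset ℕ, EMetric.diam (tset k n₀ (n, F)) ^ s ≤ cseq k s n := by
  classical
  have hz : ∀ F ∉ fam k n, EMetric.diam (tset k n₀ (n, F)) ^ s = 0 := by
    intro F hF
    rw [tset, if_neg (by intro hc; exact hF hc.2)]
    simp [ENNReal.zero_rpow_of_pos hs, EMetric.diam]
  rw [tsum_eq_sum hz]
  set B : ENNReal := (ENNReal.ofReal (((Nat.factorial (n+1) : ℝ)⁻¹)^2)) ^ s with hB
  have hterm : ∀ F ∈ fam k n, EMetric.diam (tset k n₀ (n, F)) ^ s ≤ B := by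
    intro F hF
    rw [tset, if_pos ⟨hn, hF⟩, hB]
    apply ENNReal.rpow_le_rpow _ hs.le
    have hcard : F.card = n+1 := (Finset.mem_filter.mp hF).2
    have := cyl_diam F
    rwa [hcard] at this
  have hfin : (0:ℝ) < ((Nat.factorial (n+1) : ℝ)⁻¹)^2 := by
    have : (0:ℝ) < (Nat.factorial (n+1) : ℝ) := by exact_mod_cast Nat.factorial_pos _
    positivity
  calc ∑ F ∈ fam k n, EMetric.diam (tset k n₀ (n, F)) ^ s
      ≤ ∑ _F ∈ fam k n, B := Finset.sum_le_sum hterm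
    _ = ((fam k n).card : ENNReal) * B := by rw [Finset.sum_const, nsmul_eq_mul]
    _ ≤ ((2^(k*(n+1)) : ℕ) : ENNReal) * B := by
        apply mul_le_mul_left
        exact_mod_cast Nat.cast_le.mpr (fam_card_le k n)
    _ = cseq k s n := by
        rw [hB, cseq, bR, ENNReal.ofReal_mul (by positivity),
          ENNReal.ofReal_rpow_of_pos hfin]
        congr 1
        have h2 : ((2:ℝ)^(k*(n+1))) = ((2^(k*(n+1)) : ℕ) : ℝ) := by push_cast; ring
        rw [h2, ENNReal.ofReal_natCast]

lemma Ek_null (k : ℕ) {s : ℝ} (hs : 0 < s) : μH[s] (Ek k) = 0 := by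
  refine le_antisymm ?_ zero_le
  have hle := MeasureTheory.Measure.hausdorffMeasure_le_liminf_tsum s (Ek k) rad rad_tendsto
    (fun n₀ p => tset k n₀ p)
    (Filter.Eventually.of_forall fun n₀ p => tset_diam_le k n₀ p)
    (Filter.Eventually.of_forall fun n₀ => Ek_subset_cover k n₀)
  refine le_trans hle ?_
  have hLle : ∀ n₀ : ℕ, ∑' p : ℕ × Finset ℕ, EMetric.diam (tset k n₀ p) ^ s
      ≤ ∑' j, cseq k s (j + n₀) := by
    intro n₀
    rw [ENNReal.tsum_prod']
    set g : ℕ → ENNReal := fun n => if n₀ ≤ n then cseq k s n else 0 with hg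
    have h1 : ∑' (n : ℕ) (F : Finset ℕ), EMetric.diam (tset k n₀ (n, F)) ^ s ≤ ∑' n, g n := by
      apply ENNReal.tsum_le_tsum
      intro n
      by_cases hn : n₀ ≤ n
      · rw [hg]; simp only [if_pos hn]; exact inner_le k n₀ n hs hn
      · rw [hg]; simp only [if_neg hn]
        have hzz : ∀ F : Finset ℕ, EMetric.diam (tset k n₀ (n, F)) ^ s = 0 := by
          intro F
          rw [tset, if_neg (fun hc => hn hc.1)]
          simp [ENNReal.zero_rpow_of_pos hs, EMetric.diam]
        simp [hzz]
    refine h1.trans (le_of_eq ?_)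
    have hinj : Function.Injective (fun j : ℕ => j + n₀) := fun a b h => by simpa using h
    have hsupp : Function.support g ⊆ Set.range (fun j : ℕ => j + n₀) := by
      intro n hn
      rcases le_or_gt n₀ n with h | h
      · exact ⟨n - n₀, by simpa using Nat.sub_add_cancel h⟩
      · exfalso
        apply hn
        rw [hg]
        simp [Nat.not_le.mpr h]
    have h2 : ∑' j, g (j + n₀) = ∑' n, g n := hinj.tsum_eq hsupp
    have htail : ∀ j : ℕ, g (j + n₀) = cseq k s (j + n₀) := by
      intro j
      rw [hg]
      simp [Nat.le_add_left n₀ j]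
    rw [← h2]
    exact tsum_congr htail
  calc Filter.liminf (fun n₀ => ∑' p : ℕ × Finset ℕ, EMetric.diam (tset k n₀ p) ^ s) Filter.atTop
      ≤ Filter.liminf (fun n₀ => ∑' j, cseq k s (j + n₀)) Filter.atTop :=
        Filter.liminf_le_liminf (Filter.Eventually.of_forall hLle)
    _ = 0 := (ENNReal.tendsto_sum_nat_add (cseq k s) (cseq_ne_top k hs)).liminf_eq

/-- For `S ⊆ ℕ` infinite of positive upper density, the set of `x` in
`J = {x irrational in (0,1) : strictly increasing digits}` such that
`{aₙ(x) : n} ∩ S` has positive upper density is of Hausdorff dimension `0`. -/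
theorem stmt12 (S : Set ℕ) (hS : S.Infinite) (hd : 0 < upperDensity S) :
    dimH {x : ℝ | x ∈ Set.Ioo (0 : ℝ) 1 ∧ Irrational x ∧
        StrictMono (fun n : ℕ => cfDigit n x) ∧
        0 < upperDensity ({a : ℕ | ∃ n : ℕ, cfDigit n x = a} ∩ S)} = 0 := by
  classical
  set E := {x : ℝ | x ∈ Set.Ioo (0 : ℝ) 1 ∧ Irrational x ∧
        StrictMono (fun n : ℕ => cfDigit n x) ∧
        0 < upperDensity ({a : ℕ | ∃ n : ℕ, cfDigit n x = a} ∩ S)} with hE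
  have hsub : E ⊆ ⋃ k : ℕ, Ek k := by
    intro x hx
    obtain ⟨hx1, hx2, hx3, hx4⟩ := hx
    obtain ⟨k, hk⟩ := exists_k hx1 hx3
      (A := {a : ℕ | ∃ n : ℕ, cfDigit n x = a} ∩ S) (fun a ha => ha.1) hx4
    exact Set.mem_iUnion.mpr ⟨k, hx1, hx3, hk⟩
  have hnull : ∀ d : NNReal, 0 < d → μH[(d:ℝ)] E = 0 := by
    intro d hd'
    apply measure_mono_null hsub
    apply measure_iUnion_null
    intro k
    exact Ek_null k (by exact_mod_cast hd')
  refine le_antisymm ?_ zero_le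
  by_contra hpos
  rw [not_le] at hpos
  obtain ⟨d, hd0, hdlt⟩ := ENNReal.lt_iff_exists_nnreal_btwn.mp hpos
  have hd0' : 0 < d := by exact_mod_cast hd0
  have hle : dimH E ≤ (d : ENNReal) := by
    apply dimH_le_of_hausdorffMeasure_ne_top
    rw [hnull d hd0']
    exact ENNReal.zero_ne_top
  exact absurd hdlt (not_lt.mpr hle)
end

section
/- There exists a constant C ≥ 1 such that for every sequence σ ∈ {−1,1}^ℕ, every n ∈ ℕ, and all positive integers a₁,...,aₙ with σᵢ + aᵢ ≥ 1 and aᵢ ≥ 3 for i = 1,...,n, the semi-regular fundamental interval I_σ(a₁,...,aₙ) satisfies C^{−1}∏ᵢ 1/(aᵢ+1)² ≤ |I_σ(a₁,...,aₙ)| ≤ C∏ᵢ 1/(aᵢ−1)². -/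
open Filter Set

/-- One step of the semi-regular continued fraction algorithm with sign `s = ±1`:
`T₁ x = 1/x − ⌊1/x⌋` and `T₋₁ x = ⌊1/x⌋ − 1/x + 1`. -/
noncomputable def srStep (s : ℤ) (x : ℝ) : ℝ :=
  if s = 1 then Int.fract x⁻¹ else 1 - Int.fract x⁻¹

/-- The digit extracted with sign `s = ±1`: `⌊1/x⌋` if `s = 1` and `⌊1/x⌋ + 1` if `s = −1`. -/
noncomputable def srDigitOf (s : ℤ) (x : ℝ) : ℕ :=
  if s = 1 then ⌊x⁻¹⌋₊ else ⌊x⁻¹⌋₊ + 1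

/-- The orbit of `x` under the semi-regular algorithm with sign sequence `σ`. -/
noncomputable def srOrbit (σ : ℕ → ℤ) (x : ℝ) : ℕ → ℝ
  | 0 => x
  | n + 1 => srStep (σ n) (srOrbit σ x n)

/-- The fundamental interval `I_σ(a₁, …, aₙ)` of the semi-regular continued fraction:
the set of `x ∈ (0,1)` whose first `n` semi-regular digits are `a 0, …, a (n-1)`. -/
noncomputable def srFundInterval (σ : ℕ → ℤ) (n : ℕ) (a : Fin n → ℕ) : Set ℝ :=
  {x ∈ Set.Ioo (0 : ℝ) 1 | ∀ i : Fin n, srDigitOf (σ i) (srOrbit σ x i) = a i}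

noncomputable def srPsi (s : ℤ) (a : ℕ) (y : ℝ) : ℝ := ((a : ℝ) + (s : ℝ) * y)⁻¹

noncomputable def srG (σ : ℕ → ℤ) : (n : ℕ) → (Fin n → ℕ) → ℝ → ℝ
  | 0, _ => id
  | n + 1, a => fun y => srPsi (σ 0) (a 0) (srG (fun k => σ (k + 1)) n (fun i => a i.succ) y)

lemma psi_mem {s : ℤ} {a : ℕ} (hs : s = 1 ∨ s = -1) (ha : 3 ≤ a) {t : ℝ}
    (ht : t ∈ Icc (0:ℝ) 1) : srPsi s a t ∈ Ioo (0:ℝ) 1 := by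
  have ha' : (3:ℝ) ≤ (a:ℝ) := by exact_mod_cast ha
  obtain ⟨ht0, ht1⟩ := ht
  have hd : 1 < (a:ℝ) + (s:ℝ) * t := by
    rcases hs with h | h <;> subst h <;> push_cast <;> nlinarith
  exact ⟨inv_pos.mpr (by linarith), inv_lt_one_of_one_lt₀ (by linarith)⟩

lemma psi_dist {s : ℤ} {a : ℕ} (hs : s = 1 ∨ s = -1) (ha : 3 ≤ a) {u v : ℝ}
    (hu : u ∈ Icc (0:ℝ) 1) (hv : v ∈ Icc (0:ℝ) 1) :
    |u - v| / ((a:ℝ) + 1) ^ 2 ≤ |srPsi s a u - srPsi s a v| ∧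
      |srPsi s a u - srPsi s a v| ≤ |u - v| / ((a:ℝ) - 1) ^ 2 := by
  have ha' : (3:ℝ) ≤ (a:ℝ) := by exact_mod_cast ha
  obtain ⟨hu0, hu1⟩ := hu
  obtain ⟨hv0, hv1⟩ := hv
  have hss : |(s:ℝ)| = 1 := by rcases hs with h | h <;> subst h <;> simp
  have hdu1 : (a:ℝ) - 1 ≤ (a:ℝ) + (s:ℝ) * u ∧ (a:ℝ) + (s:ℝ) * u ≤ (a:ℝ) + 1 := by
    rcases hs with h | h <;> subst h <;> push_cast <;> constructor <;> nlinarith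
  have hdv1 : (a:ℝ) - 1 ≤ (a:ℝ) + (s:ℝ) * v ∧ (a:ℝ) + (s:ℝ) * v ≤ (a:ℝ) + 1 := by
    rcases hs with h | h <;> subst h <;> push_cast <;> constructor <;> nlinarith
  have hdupos : (0:ℝ) < (a:ℝ) + (s:ℝ) * u := by linarith [hdu1.1]
  have hdvpos : (0:ℝ) < (a:ℝ) + (s:ℝ) * v := by linarith [hdv1.1]
  have key : srPsi s a u - srPsi s a v =
      ((s:ℝ) * (v - u)) / (((a:ℝ) + (s:ℝ) * u) * ((a:ℝ) + (s:ℝ) * v)) := by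
    rw [srPsi, srPsi]
    field_simp
    ring
  have habs : |srPsi s a u - srPsi s a v| =
      |u - v| / (((a:ℝ) + (s:ℝ) * u) * ((a:ℝ) + (s:ℝ) * v)) := by
    rw [key, abs_div, abs_mul, hss, one_mul, abs_sub_comm,
      abs_of_pos (mul_pos hdupos hdvpos)]
  rw [habs]
  constructor
  · apply div_le_div_of_nonneg_left (abs_nonneg _) (mul_pos hdupos hdvpos)
    nlinarith [hdu1.2, hdv1.2]
  · apply div_le_div_of_nonneg_left (abs_nonneg _) (by nlinarith : (0:ℝ) < ((a:ℝ)-1)^2)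
    nlinarith [hdu1.1, hdv1.1]

lemma psi_digit {s : ℤ} {a : ℕ} (hs : s = 1 ∨ s = -1) (ha : 3 ≤ a) {t : ℝ}
    (ht : t ∈ Ioo (0:ℝ) 1) :
    srDigitOf s (srPsi s a t) = a ∧ srStep s (srPsi s a t) = t := by
  have ha' : (3:ℝ) ≤ (a:ℝ) := by exact_mod_cast ha
  obtain ⟨ht0, ht1⟩ := ht
  rcases hs with h | h <;> subst h
  · have hd : (0:ℝ) < (a:ℝ) + (1:ℤ) * t := by push_cast; nlinarith
    have hinv : (srPsi 1 a t)⁻¹ = (a:ℝ) + (1:ℤ) * t := by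
      rw [srPsi, inv_inv]
    have hfl : ⌊(srPsi 1 a t)⁻¹⌋₊ = a := by
      rw [hinv]
      rw [Nat.floor_eq_iff (by positivity)]
      push_cast
      constructor <;> nlinarith
    have hfr : Int.fract ((srPsi 1 a t)⁻¹) = t := by
      rw [hinv]
      push_cast
      rw [add_comm, Int.fract_add_natCast, one_mul, Int.fract_eq_self.mpr ⟨le_of_lt ht0, ht1⟩]
    constructor
    · rw [srDigitOf, if_pos rfl, hfl]
    · rw [srStep, if_pos rfl, hfr]
  · have hd : (0:ℝ) < (a:ℝ) + ((-1:ℤ):ℝ) * t := by push_cast; nlinarith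
    have hinv : (srPsi (-1) a t)⁻¹ = (a:ℝ) - t := by
      rw [srPsi, inv_inv]; push_cast; ring
    have hfl : ⌊(srPsi (-1) a t)⁻¹⌋₊ = a - 1 := by
      rw [hinv]
      rw [Nat.floor_eq_iff (by nlinarith)]
      have : ((a - 1 : ℕ) : ℝ) = (a:ℝ) - 1 := by
        push_cast [Nat.cast_sub (by omega : 1 ≤ a)]; ring
      rw [this]
      constructor <;> nlinarith
    have hfr : Int.fract ((srPsi (-1) a t)⁻¹) = 1 - t := by
      rw [hinv, Int.fract]
      have : ⌊(a:ℝ) - t⌋ = (a:ℤ) - 1 := by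
        rw [Int.floor_eq_iff] <;> push_cast <;> constructor <;> nlinarith
      rw [this]
      push_cast
      ring
    constructor
    · rw [srDigitOf, if_neg (by decide), hfl]; omega
    · rw [srStep, if_neg (by decide), hfr]; ring

lemma step_mem {s : ℤ} (x : ℝ) : srStep s x ∈ Icc (0:ℝ) 1 := by
  rw [srStep]
  have h1 := Int.fract_nonneg x⁻¹
  have h2 := Int.fract_lt_one x⁻¹
  split <;> constructor <;> linarith

lemma digit_inv {s : ℤ} {a : ℕ} {x : ℝ} (hs : s = 1 ∨ s = -1) (ha : 3 ≤ a)
    (hd : srDigitOf s x = a) : x = srPsi s a (srStep s x) := by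
  have ha' : (3:ℝ) ≤ (a:ℝ) := by exact_mod_cast ha
  rcases hs with h | h <;> subst h
  · rw [srDigitOf, if_pos rfl] at hd
    have h1 : ((a:ℝ)) ≤ x⁻¹ ∧ x⁻¹ < (a:ℝ) + 1 := by
      rw [Nat.floor_eq_iff' (by omega)] at hd
      exact_mod_cast hd
    have hx0 : 0 < x := by
      by_contra hx
      push_neg at hx
      have : x⁻¹ ≤ 0 := inv_nonpos.mpr hx
      linarith [h1.1]
    have hfl : ⌊x⁻¹⌋ = (a:ℤ) := by
      rw [Int.floor_eq_iff]
      constructor <;> push_cast <;> linarith [h1.1, h1.2]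
    have hfr : Int.fract x⁻¹ = x⁻¹ - (a:ℝ) := by
      rw [Int.fract, hfl]
      push_cast
      ring
    rw [srStep, if_pos rfl, hfr, srPsi]
    push_cast
    rw [show (a:ℝ) + 1 * (x⁻¹ - (a:ℝ)) = x⁻¹ by ring, inv_inv]
  · rw [srDigitOf, if_neg (by decide)] at hd
    have hfl0 : ⌊x⁻¹⌋₊ = a - 1 := by omega
    have hcast : ((a - 1 : ℕ) : ℝ) = (a:ℝ) - 1 := by
      push_cast [Nat.cast_sub (by omega : 1 ≤ a)]
      ring
    have h1 : ((a:ℝ) - 1) ≤ x⁻¹ ∧ x⁻¹ < (a:ℝ) := by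
      rw [Nat.floor_eq_iff' (by omega)] at hfl0
      rw [hcast] at hfl0
      refine ⟨hfl0.1, by linarith [hfl0.2]⟩
    have hx0 : 0 < x := by
      by_contra hx
      push_neg at hx
      have : x⁻¹ ≤ 0 := inv_nonpos.mpr hx
      linarith [h1.1]
    have hfl : ⌊x⁻¹⌋ = (a:ℤ) - 1 := by
      rw [Int.floor_eq_iff]
      constructor <;> push_cast <;> linarith [h1.1, h1.2]
    have hfr : Int.fract x⁻¹ = x⁻¹ - (a:ℝ) + 1 := by
      rw [Int.fract, hfl]
      push_cast
      ring
    rw [srStep, if_neg (by decide), hfr, srPsi]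
    push_cast
    rw [show (a:ℝ) + -1 * (1 - (x⁻¹ - (a:ℝ) + 1)) = x⁻¹ by ring, inv_inv]

lemma srOrbit_shift (σ : ℕ → ℤ) (x : ℝ) : ∀ i : ℕ,
    srOrbit σ x (i + 1) = srOrbit (fun k => σ (k + 1)) (srStep (σ 0) x) i
  | 0 => rfl
  | i + 1 => by
    show srStep (σ (i + 1)) (srOrbit σ x (i + 1)) = _
    rw [srOrbit_shift σ x i]
    rfl

lemma srG_mem : ∀ (n : ℕ) (σ : ℕ → ℤ) (a : Fin n → ℕ), (∀ i, σ i = 1 ∨ σ i = -1) →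
    (∀ i, 3 ≤ a i) → ∀ t ∈ Icc (0:ℝ) 1, srG σ n a t ∈ Icc (0:ℝ) 1
  | 0, σ, a, _, _, t, ht => ht
  | n + 1, σ, a, hσ, ha, t, ht => by
    have h := srG_mem n (fun k => σ (k + 1)) (fun i => a i.succ)
      (fun i => hσ (i + 1)) (fun i => ha i.succ) t ht
    exact Ioo_subset_Icc_self (psi_mem (hσ 0) (ha 0) h)

lemma srG_dist : ∀ (n : ℕ) (σ : ℕ → ℤ) (a : Fin n → ℕ), (∀ i, σ i = 1 ∨ σ i = -1) →
    (∀ i, 3 ≤ a i) → ∀ u ∈ Icc (0:ℝ) 1, ∀ v ∈ Icc (0:ℝ) 1,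
    |u - v| * ∏ i, (1:ℝ) / ((a i : ℝ) + 1) ^ 2 ≤ |srG σ n a u - srG σ n a v| ∧
      |srG σ n a u - srG σ n a v| ≤ |u - v| * ∏ i, (1:ℝ) / ((a i : ℝ) - 1) ^ 2
  | 0, σ, a, _, _, u, hu, v, hv => by simp [srG]
  | n + 1, σ, a, hσ, ha, u, hu, v, hv => by
    set σ' := fun k => σ (k + 1) with hσ'
    set a' := fun i : Fin n => a i.succ with ha'
    have hσ'' : ∀ i, σ' i = 1 ∨ σ' i = -1 := fun i => hσ (i + 1)
    have ha'' : ∀ i, 3 ≤ a' i := fun i => ha i.succ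
    have hGu := srG_mem n σ' a' hσ'' ha'' u hu
    have hGv := srG_mem n σ' a' hσ'' ha'' v hv
    have ih := srG_dist n σ' a' hσ'' ha'' u hu v hv
    have hp := psi_dist (hσ 0) (ha 0) hGu hGv
    have ha0 : (3:ℝ) ≤ ((a 0 : ℕ):ℝ) := by exact_mod_cast ha 0
    have e : ∀ y, srG σ (n + 1) a y = srPsi (σ 0) (a 0) (srG σ' n a' y) := fun y => rfl
    rw [e u, e v, Fin.prod_univ_succ, Fin.prod_univ_succ]
    constructor
    · calc |u - v| * ((1:ℝ) / ((a 0 : ℝ) + 1) ^ 2 * ∏ i : Fin n, (1:ℝ) / ((a' i : ℝ) + 1) ^ 2)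
          = (|u - v| * ∏ i : Fin n, (1:ℝ) / ((a' i : ℝ) + 1) ^ 2) / ((a 0 : ℝ) + 1) ^ 2 := by
            ring
        _ ≤ |srG σ' n a' u - srG σ' n a' v| / ((a 0 : ℝ) + 1) ^ 2 := by
            gcongr
            exact ih.1

        _ ≤ _ := hp.1
    · calc |srPsi (σ 0) (a 0) (srG σ' n a' u) - srPsi (σ 0) (a 0) (srG σ' n a' v)|
          ≤ |srG σ' n a' u - srG σ' n a' v| / ((a 0 : ℝ) - 1) ^ 2 := hp.2
        _ ≤ (|u - v| * ∏ i : Fin n, (1:ℝ) / ((a' i : ℝ) - 1) ^ 2) / ((a 0 : ℝ) - 1) ^ 2 := by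
            gcongr
            exact ih.2
        _ = |u - v| * ((1:ℝ) / ((a 0 : ℝ) - 1) ^ 2 * ∏ i : Fin n, (1:ℝ) / ((a' i : ℝ) - 1) ^ 2) := by
            ring

lemma srG_mem_fund : ∀ (n : ℕ) (σ : ℕ → ℤ) (a : Fin n → ℕ), (∀ i, σ i = 1 ∨ σ i = -1) →
    (∀ i, 3 ≤ a i) → ∀ t ∈ Ioo (0:ℝ) 1, srG σ n a t ∈ srFundInterval σ n a
  | 0, σ, a, _, _, t, ht => ⟨ht, fun i => i.elim0⟩
  | n + 1, σ, a, hσ, ha, t, ht => by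
    set σ' := fun k => σ (k + 1) with hσ'
    set a' := fun i : Fin n => a i.succ with ha'
    have hσ'' : ∀ i, σ' i = 1 ∨ σ' i = -1 := fun i => hσ (i + 1)
    have ha'' : ∀ i, 3 ≤ a' i := fun i => ha i.succ
    have ih := srG_mem_fund n σ' a' hσ'' ha'' t ht
    have hG : srG σ' n a' t ∈ Ioo (0:ℝ) 1 := ih.1
    have hd := psi_digit (hσ 0) (ha 0) hG
    have e : srG σ (n + 1) a t = srPsi (σ 0) (a 0) (srG σ' n a' t) := rfl
    refine ⟨by rw [e]; exact psi_mem (hσ 0) (ha 0) (Ioo_subset_Icc_self hG), ?_⟩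
    intro i
    induction i using Fin.cases with
    | zero =>
      show srDigitOf (σ 0) (srOrbit σ (srG σ (n+1) a t) 0) = a 0
      rw [e]
      exact hd.1
    | succ j =>
      have horb : srOrbit σ (srG σ (n+1) a t) (j.val + 1) = srOrbit σ' (srG σ' n a' t) j.val := by
        rw [srOrbit_shift, e, hd.2]
      have : (j.succ : Fin (n+1)).val = j.val + 1 := rfl
      rw [this, horb]
      exact ih.2 j
    
lemma fund_sub_image : ∀ (n : ℕ) (σ : ℕ → ℤ) (a : Fin n → ℕ), (∀ i, σ i = 1 ∨ σ i = -1) →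
    (∀ i, 3 ≤ a i) → ∀ x ∈ Icc (0:ℝ) 1, (∀ i : Fin n, srDigitOf (σ i) (srOrbit σ x i) = a i) →
    ∃ t ∈ Icc (0:ℝ) 1, srG σ n a t = x
  | 0, σ, a, _, _, x, hx, _ => ⟨x, hx, rfl⟩
  | n + 1, σ, a, hσ, ha, x, hx, hdig => by
    set σ' := fun k => σ (k + 1) with hσ'
    set a' := fun i : Fin n => a i.succ with ha'
    have hσ'' : ∀ i, σ' i = 1 ∨ σ' i = -1 := fun i => hσ (i + 1)
    have ha'' : ∀ i, 3 ≤ a' i := fun i => ha i.succ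
    have hd0 : srDigitOf (σ 0) x = a 0 := hdig 0
    have hx : x = srPsi (σ 0) (a 0) (srStep (σ 0) x) := digit_inv (hσ 0) (ha 0) hd0
    set y := srStep (σ 0) x with hy
    have hdig' : ∀ i : Fin n, srDigitOf (σ' i) (srOrbit σ' y i) = a' i := by
      intro i
      have := hdig i.succ
      rwa [show (i.succ : Fin (n+1)).val = i.val + 1 from rfl, srOrbit_shift] at this
    obtain ⟨t, ht, hgt⟩ := fund_sub_image n σ' a' hσ'' ha'' y (step_mem x) hdig'
    refine ⟨t, ht, ?_⟩
    show srPsi (σ 0) (a 0) (srG σ' n a' t) = x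
    rw [hgt, ← hx]

/-- There is `C ≥ 1` such that for every sign sequence `σ ∈ {−1,1}^ℕ`, every `n` and all
digits `a₁, …, aₙ` with `σᵢ + aᵢ ≥ 1` and `aᵢ ≥ 3`, one has
`C⁻¹ ∏ 1/(aᵢ+1)² ≤ |I_σ(a₁,…,aₙ)| ≤ C ∏ 1/(aᵢ−1)²`. -/
theorem stmt18 :
    ∃ C : ℝ, 1 ≤ C ∧ ∀ σ : ℕ → ℤ, (∀ i, σ i = 1 ∨ σ i = -1) →
      ∀ n : ℕ, ∀ a : Fin n → ℕ, (∀ i, 3 ≤ a i) → (∀ i : Fin n, 1 ≤ σ i + (a i : ℤ)) →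
        C⁻¹ * ∏ i, (1 : ℝ) / ((a i : ℝ) + 1) ^ 2 ≤ Metric.diam (srFundInterval σ n a) ∧
          Metric.diam (srFundInterval σ n a) ≤ C * ∏ i, (1 : ℝ) / ((a i : ℝ) - 1) ^ 2 := by
  refine ⟨1, le_refl 1, fun σ hσ n a ha _ => ?_⟩
  rw [inv_one, one_mul, one_mul]
  set P1 := ∏ i, (1 : ℝ) / ((a i : ℝ) + 1) ^ 2 with hP1
  set P2 := ∏ i, (1 : ℝ) / ((a i : ℝ) - 1) ^ 2 with hP2
  have hacast : ∀ i, (3:ℝ) ≤ ((a i : ℕ):ℝ) := fun i => by exact_mod_cast ha i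
  have hP2nn : 0 ≤ P2 := Finset.prod_nonneg fun i _ => by positivity
  have hP1pos : 0 < P1 := Finset.prod_pos fun i _ => by positivity
  have hP1le : P1 ≤ 1 := by
    apply Finset.prod_le_one (fun i _ => by positivity)
    intro i _
    rw [div_le_one (by positivity)]
    nlinarith [hacast i]
  have hbdd : Bornology.IsBounded (srFundInterval σ n a) :=
    (Metric.isBounded_Ioo (0:ℝ) 1).subset fun x hx => hx.1
  constructor
  · -- lower bound
    apply le_of_forall_pos_le_add
    intro ε hε
    set t : ℝ := min (ε / 2) (1 / 4) with hT
    have ht0 : 0 < t := lt_min (by linarith) (by norm_num)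
    have ht4 : t ≤ 1 / 4 := min_le_right _ _
    have htε : t ≤ ε / 2 := min_le_left _ _
    have h1 : srG σ n a t ∈ srFundInterval σ n a :=
      srG_mem_fund n σ a hσ ha t ⟨ht0, by linarith⟩
    have h2 : srG σ n a (1 - t) ∈ srFundInterval σ n a :=
      srG_mem_fund n σ a hσ ha (1 - t) ⟨by linarith, by linarith⟩
    have hdist := (srG_dist n σ a hσ ha t ⟨le_of_lt ht0, by linarith⟩
      (1 - t) ⟨by linarith, by linarith⟩).1
    have habs : |t - (1 - t)| = 1 - 2 * t := by
      rw [abs_of_nonpos (by linarith)]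
      ring
    rw [habs] at hdist
    have hle : |srG σ n a t - srG σ n a (1 - t)| ≤ Metric.diam (srFundInterval σ n a) := by
      rw [← Real.dist_eq]
      exact Metric.dist_le_diam_of_mem hbdd h1 h2
    nlinarith
  · -- upper bound
    apply Metric.diam_le_of_forall_dist_le hP2nn
    intro x hx y hy
    obtain ⟨u, hu, hgu⟩ := fund_sub_image n σ a hσ ha x (Ioo_subset_Icc_self hx.1) hx.2
    obtain ⟨v, hv, hgv⟩ := fund_sub_image n σ a hσ ha y (Ioo_subset_Icc_self hy.1) hy.2
    have hd := (srG_dist n σ a hσ ha u hu v hv).2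
    rw [hgu, hgv] at hd
    have huv : |u - v| ≤ 1 := by
      rw [abs_le]
      obtain ⟨h1, h2⟩ := hu; obtain ⟨h3, h4⟩ := hv
      constructor <;> linarith
    calc dist x y = |x - y| := Real.dist_eq x y
      _ ≤ |u - v| * P2 := hd
      _ ≤ 1 * P2 := by gcongr
      _ = P2 := one_mul P2
end
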